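/- arXiv:2510.12152 — 9 statements merged into one kernel-verified Lean document; each statement's English description precedes it below -/
import Mathlib

section
/- Let α > 1, K ≥ 1 an integer, i ∈ {1,…,K}, and λ ∈ ℝ^K. Let r = (r_1,…,r_K) be a random vector whose components are i.i.d. Pareto with shape α (density α x^{-(α+1)} on [1,∞)). Then the probability that λ_i − r_i < λ_j − r_j for all j ≠ i equals ∫_1^∞ α (z+λ̲_i)^{-(α+1)} ∏_{j≠i} (1 − (z+λ̲_j)^{-α}) dz, where λ̲ := λ − (min_j λ_j)·𝟏. -/
/-!
Conditioning on `r i = x`, the event says `r j < x + (λ j - λ i)` for every `j ≠ i`, so by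
independence its probability is `∫ f(x) ∏_{j ≠ i} F(x + λ j - λ i) dx` with `f`, `F` the Pareto
density and distribution function. Substituting `x = z + λ̲ i` turns the arguments into
`z + λ̲ j`. The integrand vanishes for `z < 1`: either `z + λ̲ i < 1`, outside the support of `f`,
or `λ̲ i > 0`, and then the factor of a minimizing index `j₀ ≠ i` is `F(z) = 0`.
-/

open MeasureTheory ProbabilityTheory Set Finset
open scoped ENNReal

theorem Fin.prod_erase_eq_prod_succAbove {M : Type*} [CommMonoid M] {n : ℕ}
    (f : Fin (n + 1) → M) (i : Fin (n + 1)) :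
    ∏ j ∈ univ.erase i, f j = ∏ k, f (i.succAbove k) := by
  rw [Fin.univ_succAbove n i, erase_cons, prod_map, Fin.coe_succAboveEmb]

theorem measure_pi_setOf_forall_ne_lt_add {n : ℕ} (μ : Fin (n + 1) → Measure ℝ)
    [∀ j, SigmaFinite (μ j)] (i : Fin (n + 1)) (c : Fin (n + 1) → ℝ) :
    Measure.pi μ {r | ∀ j ≠ i, r j < r i + c j}
      = ∫⁻ x, ∏ j ∈ univ.erase i, μ j (Iio (x + c j)) ∂μ i := by
  set S := {p : ℝ × (Fin n → ℝ) | ∀ k, p.2 k < p.1 + c (i.succAbove k)}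
  have hS : MeasurableSet S := by
    simp only [S, ofPred_forall]
    exact .iInter fun k => measurableSet_lt (by fun_prop) (by fun_prop)
  have hpre : {r | ∀ j ≠ i, r j < r i + c j}
      = MeasurableEquiv.piFinSuccAbove (fun _ => ℝ) i ⁻¹' S := by
    ext r
    simp [S, Fin.forall_iff_succAbove i, Fin.removeNth]
  rw [hpre, (measurePreserving_piFinSuccAbove μ i).measure_preimage_equiv, Measure.prod_apply hS]
  refine lintegral_congr fun x => ?_
  have hslice : Prod.mk x ⁻¹' S = univ.pi fun k => Iio (x + c (i.succAbove k)) := by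
    ext; simp [S]
  rw [hslice, Measure.pi_pi, Fin.prod_erase_eq_prod_succAbove]

section Pareto

variable {t r y : ℝ}

theorem paretoMeasure_Iio_of_le (hy : y ≤ t) : paretoMeasure t r (Iio y) = 0 := by
  rw [paretoMeasure, withDensity_apply _ measurableSet_Iio, lintegral_paretoPDF_of_le hy]

theorem paretoMeasure_Ici (ht : 0 < t) (hr : 0 < r) (hy : t ≤ y) :
    paretoMeasure t r (Ici y) = ENNReal.ofReal (t ^ r * y ^ (-r)) := by
  have hy0 : 0 < y := ht.trans_le hy
  rw [paretoMeasure, withDensity_apply _ measurableSet_Ici,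
    setLIntegral_congr_fun measurableSet_Ici fun x hx => paretoPDF_of_le (hy.trans hx),
    ← setLIntegral_congr Ioi_ae_eq_Ici, ← ofReal_integral_eq_lintegral_ofReal]
  · rw [integral_const_mul, integral_Ioi_rpow_of_lt (by linarith) hy0,
      show -(r + 1) + 1 = -r by ring, neg_div_neg_eq]
    field_simp
  · exact ((integrableOn_Ioi_rpow_of_lt (by linarith) hy0).const_mul _)
  · filter_upwards [ae_restrict_mem measurableSet_Ioi] with x hx
    have : 0 < x := hy0.trans hx
    positivity

theorem paretoMeasure_Iio (ht : 0 < t) (hr : 0 < r) (hy : t ≤ y) :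
    paretoMeasure t r (Iio y) = ENNReal.ofReal (1 - t ^ r * y ^ (-r)) := by
  have := isProbabilityMeasure_paretoMeasure ht hr
  rw [← compl_Ici, prob_compl_eq_one_sub measurableSet_Ici, paretoMeasure_Ici ht hr hy,
    ENNReal.ofReal_sub _ (mul_nonneg (Real.rpow_nonneg ht.le _)
      (Real.rpow_nonneg (ht.le.trans hy) _)), ENNReal.ofReal_one]

end Pareto

theorem one_sub_rpow_neg_nonneg {y α : ℝ} (hy : 1 ≤ y) (hα : 0 ≤ α) :
    0 ≤ 1 - y ^ (-α) :=
  sub_nonneg.2 (Real.rpow_le_one_of_one_le_of_nonpos hy (neg_nonpos.2 hα))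

theorem lintegral_prod_paretoMeasure_Iio_add_sub {ι : Type*} [Fintype ι] [DecidableEq ι]
    {α : ℝ} (hα : 0 < α) {d : ι → ℝ} (hd : ∀ j, 0 ≤ d j) {j₀ : ι} (hj₀ : d j₀ = 0) (i : ι) :
    ∫⁻ x, ∏ j ∈ univ.erase i, paretoMeasure 1 α (Iio (x + (d j - d i))) ∂paretoMeasure 1 α
      = ∫⁻ z in Ioi 1, ENNReal.ofReal
          (α * (z + d i) ^ (-(α + 1)) * ∏ j ∈ univ.erase i, (1 - (z + d j) ^ (-α))) := by
  set g : ℝ → ℝ≥0∞ := fun z =>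
    paretoPDF 1 α (z + d i) * ∏ j ∈ univ.erase i, paretoMeasure 1 α (Iio (z + d j))
  have shift : ∫⁻ x, ∏ j ∈ univ.erase i, paretoMeasure 1 α (Iio (x + (d j - d i)))
      ∂paretoMeasure 1 α = ∫⁻ z, g z := by
    refine (lintegral_withDensity_eq_lintegral_mul_non_measurable _
      (measurable_paretoPDFReal 1 α).ennreal_ofReal (ae_of_all _ fun _ => ENNReal.ofReal_lt_top)
      _).trans ?_
    rw [← lintegral_add_right_eq_self _ (d i)]
    simp only [Pi.mul_apply, add_add_sub_cancel, g]
    rfl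
  have vanish : g.support ⊆ Ici 1 := by
    intro z hz
    rw [Set.mem_Ici]
    by_contra! hz1
    rcases lt_or_ge (z + d i) 1 with h | h
    · simp [g, paretoPDF_of_lt h] at hz
    · have hj₀i : j₀ ≠ i := by rintro rfl; linarith
      refine hz (mul_eq_zero_of_right _ (prod_eq_zero (mem_erase.2 ⟨hj₀i, mem_univ _⟩) ?_))
      exact paretoMeasure_Iio_of_le (by linarith)
  have on_Ioi : ∀ z ∈ Ioi (1 : ℝ), g z = ENNReal.ofReal
      (α * (z + d i) ^ (-(α + 1)) * ∏ j ∈ univ.erase i, (1 - (z + d j) ^ (-α))) := by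
    intro z (hz : 1 < z)
    have hzd : ∀ j, 1 ≤ z + d j := fun j => by linarith [hd j]
    simp only [g, paretoPDF_of_le (hzd i), Real.one_rpow, mul_one,
      prod_congr rfl fun j _ => paretoMeasure_Iio one_pos hα (hzd j), one_mul]
    rw [ENNReal.ofReal_mul (mul_nonneg hα.le (Real.rpow_nonneg (by linarith [hzd i]) _)),
      ENNReal.ofReal_prod_of_nonneg fun j _ => one_sub_rpow_neg_nonneg (hzd j) hα.le]
  rw [shift, ← setLIntegral_eq_of_support_subset vanish, ← setLIntegral_congr Ioi_ae_eq_Ici,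
    setLIntegral_congr_fun measurableSet_Ioi on_Ioi]

theorem ftpl_pareto_selection_prob_general
    (α : ℝ) (hα : 1 < α) (K : ℕ) (i : Fin K) (lam : Fin K → ℝ) :
    (Measure.pi fun _ : Fin K => paretoMeasure 1 α)
        {r : Fin K → ℝ | ∀ j, j ≠ i → lam i - r i < lam j - r j}
      = ENNReal.ofReal
          (∫ z in Set.Ioi (1 : ℝ),
            α * (z + (lam i - ⨅ j, lam j)) ^ (-(α + 1)) *
              ∏ j ∈ Finset.univ.erase i,
                (1 - (z + (lam j - ⨅ j, lam j)) ^ (-α))) := by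
  obtain ⟨n, rfl⟩ := Nat.exists_eq_add_one_of_ne_zero i.pos.ne'
  have hα0 : 0 < α := one_pos.trans hα
  have := isProbabilityMeasure_paretoMeasure one_pos hα0
  set gap : Fin (n + 1) → ℝ := fun j => lam j - ⨅ j, lam j
  have gap_nonneg : ∀ j, 0 ≤ gap j :=
    fun j => sub_nonneg.2 (ciInf_le (Finite.bddBelow_range lam) j)
  obtain ⟨j₀, hj₀⟩ := exists_eq_ciInf_of_finite (f := lam)
  have event_eq : {r : Fin (n + 1) → ℝ | ∀ j, j ≠ i → lam i - r i < lam j - r j}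
      = {r | ∀ j ≠ i, r j < r i + (gap j - gap i)} := by
    refine Set.ext fun r => forall₂_congr fun j _ => ?_
    simp only [gap, sub_sub_sub_cancel_right]
    constructor <;> intro <;> linarith
  have key := (measure_pi_setOf_forall_ne_lt_add (fun _ => paretoMeasure 1 α) i
    (fun j => gap j - gap i)).trans
    (lintegral_prod_paretoMeasure_Iio_add_sub hα0 gap_nonneg (sub_eq_zero.2 hj₀) i)
  -- The lintegral is a probability, hence finite: no integrability argument is needed.
  rw [event_eq, key, integral_eq_lintegral_of_nonneg_ae,
    ENNReal.ofReal_toReal (key ▸ measure_ne_top _ _)]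
  · filter_upwards [ae_restrict_mem measurableSet_Ioi] with z (hz : 1 < z)
    have hzd : ∀ j, 1 ≤ z + gap j := fun j => by linarith [gap_nonneg j]
    exact mul_nonneg (mul_nonneg hα0.le (Real.rpow_nonneg (by linarith [hzd i]) _))
      (prod_nonneg fun j _ => one_sub_rpow_neg_nonneg (hzd j) hα0.le)
  · fun_prop

/-- the FTPL arm-selection probability under i.i.d. Pareto(α) perturbations
equals the integral formula. -/
theorem ftpl_pareto_selection_prob
    (α : ℝ) (hα : 1 < α) (K : ℕ) (hK : 1 ≤ K) (i : Fin K) (lam : Fin K → ℝ) :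
    (Measure.pi fun _ : Fin K => paretoMeasure 1 α)
        {r : Fin K → ℝ | ∀ j, j ≠ i → lam i - r i < lam j - r j}
      = ENNReal.ofReal
          (∫ z in Set.Ioi (1 : ℝ),
            α * (z + (lam i - ⨅ j, lam j)) ^ (-(α + 1)) *
              ∏ j ∈ Finset.univ.erase i,
                (1 - (z + (lam j - ⨅ j, lam j)) ^ (-α))) :=
  ftpl_pareto_selection_prob_general α hα K i lam
end

section
/- Let α > 1, K ≥ 2 an integer, i* ∈ {1,…,K}, and λ ∈ [0,∞)^K with λ_{i*} = 0 and ∑_{j≠i*} (2^{1/α}+λ_j)^{-α} ≤ 1/2. Then for every i ≠ i*, ∫_1^∞ α (z+λ_i)^{-(α+1)} ∏_{j≠i} (1 − (z+λ_j)^{-α}) dz ≥ 1 / (2e²(1+λ_i)^α). -/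
/-!
For `z ≥ c := 2^(1/α)` every tail `(z + λ_j)^(-α)` is at most `1/2`, and on `D_t` these tails
sum to at most `1` over `j ≠ i`: the term of `i*` is at most `c^(-α) = 1/2`, and the others are
dominated by the sum defining `D_t`. Since `1 - x ≥ exp (-2x)` on `[0, 1/2]`, the product in the
integrand is then at least `e⁻²`. Integrating the remaining Pareto density over `(c, ∞)` gives
`e⁻² (c + λ_i)^(-α)`, and `c + λ_i ≤ c (1 + λ_i)` with `c^α = 2` yields the bound.
-/

open MeasureTheory Set Finset Real

theorem exp_neg_two_mul_le_one_sub {x : ℝ} (hx0 : 0 ≤ x) (hx : x ≤ 1 / 2) :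
    exp (-(2 * x)) ≤ 1 - x := by
  have hpos : 0 < 1 + 2 * x := by linarith
  calc exp (-(2 * x)) = (exp (2 * x))⁻¹ := exp_neg _
    _ ≤ (1 + 2 * x)⁻¹ := inv_anti₀ hpos (by linarith [add_one_le_exp (2 * x)])
    _ ≤ 1 - x := by rw [inv_le_iff_one_le_mul₀ hpos]; nlinarith

theorem exp_neg_two_mul_sum_le_prod_one_sub {ι : Type*} (s : Finset ι) {x : ι → ℝ}
    (hx0 : ∀ j ∈ s, 0 ≤ x j) (hx : ∀ j ∈ s, x j ≤ 1 / 2) :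
    exp (-(2 * ∑ j ∈ s, x j)) ≤ ∏ j ∈ s, (1 - x j) := by
  rw [mul_sum, ← sum_neg_distrib, exp_sum]
  exact prod_le_prod (fun j _ => (exp_pos _).le)
    fun j hj => exp_neg_two_mul_le_one_sub (hx0 j hj) (hx j hj)

theorem integrableOn_Ioi_add_rpow {p : ℝ} (hp : p < -1) {c a : ℝ} (hca : 0 < c + a) :
    IntegrableOn (fun z => (z + a) ^ p) (Ioi c) := by
  have hemb := (MeasurableEquiv.addRight a).measurableEmbedding
  have := ((measurePreserving_add_right volume a).restrict_preimage_emb hemb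
    (Ioi (c + a))).integrable_comp_emb hemb |>.mpr (integrableOn_Ioi_rpow_of_lt hp hca)
  simpa [Function.comp_def, IntegrableOn] using this

theorem integral_Ioi_add_rpow {p : ℝ} (hp : p < -1) {c a : ℝ} (hca : 0 < c + a) :
    ∫ z in Ioi c, (z + a) ^ p = -(c + a) ^ (p + 1) / (p + 1) := by
  have := (measurePreserving_add_right volume a).setIntegral_preimage_emb
    (MeasurableEquiv.addRight a).measurableEmbedding (fun y => y ^ p) (Ioi (c + a))
  simpa [integral_Ioi_rpow_of_lt hp hca] using this

theorem integral_Ioi_mul_add_rpow_neg_add_one {α : ℝ} (hα : 0 < α) {c a : ℝ}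
    (hca : 0 < c + a) : ∫ z in Ioi c, α * (z + a) ^ (-(α + 1)) = (c + a) ^ (-α) := by
  rw [integral_const_mul, integral_Ioi_add_rpow (by linarith) hca,
    show -(α + 1) + 1 = -α by ring]
  field_simp

theorem rpow_neg_le_half {α : ℝ} (hα : 0 < α) {x : ℝ} (hx : (2 : ℝ) ^ (1 / α) ≤ x) :
    x ^ (-α) ≤ 1 / 2 := by
  calc x ^ (-α) ≤ ((2 : ℝ) ^ (1 / α)) ^ (-α) :=
        rpow_le_rpow_of_nonpos (by positivity) hx (by linarith)
    _ = 1 / 2 := by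
        rw [rpow_neg (by positivity), one_div, rpow_inv_rpow (by norm_num) hα.ne', one_div]

theorem add_rpow_le_two_mul_one_add_rpow {α : ℝ} (hα : 0 < α) {a : ℝ} (ha : 0 ≤ a) :
    ((2 : ℝ) ^ (1 / α) + a) ^ α ≤ 2 * (1 + a) ^ α := by
  have hc : 1 ≤ (2 : ℝ) ^ (1 / α) := one_le_rpow one_le_two (by positivity)
  calc ((2 : ℝ) ^ (1 / α) + a) ^ α ≤ ((2 : ℝ) ^ (1 / α) * (1 + a)) ^ α :=
        rpow_le_rpow (by positivity) (by nlinarith) hα.le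
    _ = 2 * (1 + a) ^ α := by
        rw [mul_rpow (by positivity) (by positivity), one_div, rpow_inv_rpow (by norm_num) hα.ne']

theorem one_sub_rpow_neg_mem_Icc {α : ℝ} (hα : 0 ≤ α) {x : ℝ} (hx : 1 ≤ x) :
    1 - x ^ (-α) ∈ Set.Icc 0 1 :=
  ⟨sub_nonneg.2 (rpow_le_one_of_one_le_of_nonpos hx (neg_nonpos.2 hα)),
    sub_le_self _ (rpow_nonneg (by linarith) _)⟩

section Argmin

variable {ι : Type*} [Fintype ι] [DecidableEq ι] {α : ℝ} {lam : ι → ℝ}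

noncomputable def argminIntegrand (α : ℝ) (lam : ι → ℝ) (i : ι) (z : ℝ) : ℝ :=
  α * (z + lam i) ^ (-(α + 1)) * ∏ j ∈ univ.erase i, (1 - (z + lam j) ^ (-α))

theorem argminIntegrand_mem_Icc (hα : 0 ≤ α) (hlam : ∀ j, 0 ≤ lam j) (i : ι) {z : ℝ}
    (hz : 1 ≤ z) : argminIntegrand α lam i z ∈ Set.Icc 0 (α * (z + lam i) ^ (-(α + 1))) := by
  have hfactor (j : ι) : 1 - (z + lam j) ^ (-α) ∈ Set.Icc 0 1 :=
    one_sub_rpow_neg_mem_Icc hα (by linarith [hlam j])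
  have hdensity : 0 ≤ α * (z + lam i) ^ (-(α + 1)) :=
    mul_nonneg hα (rpow_nonneg (by linarith [hlam i]) _)
  exact ⟨mul_nonneg hdensity (prod_nonneg fun j _ => (hfactor j).1),
    mul_le_of_le_one_right hdensity
      (prod_le_one (fun j _ => (hfactor j).1) fun j _ => (hfactor j).2)⟩

theorem integrableOn_argminIntegrand (hα : 0 < α) (hlam : ∀ j, 0 ≤ lam j) (i : ι) :
    IntegrableOn (argminIntegrand α lam i) (Ioi 1) := by
  refine Integrable.mono'
    ((integrableOn_Ioi_add_rpow (p := -(α + 1)) (c := 1) (a := lam i) (by linarith)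
      (by linarith [hlam i])).const_mul α)
    (by unfold argminIntegrand; fun_prop) ?_
  filter_upwards [ae_restrict_mem measurableSet_Ioi] with z hz
  have h := argminIntegrand_mem_Icc hα.le hlam i (le_of_lt hz)
  rw [Real.norm_eq_abs, abs_of_nonneg h.1]
  exact h.2

theorem sum_erase_rpow_neg_le_one (hα : 0 < α) (hlam : ∀ j, 0 ≤ lam j) {istar : ι}
    (hstar : lam istar = 0)
    (hD : ∑ j ∈ univ.erase istar, ((2 : ℝ) ^ (1 / α) + lam j) ^ (-α) ≤ 1 / 2)
    {i : ι} (hi : i ≠ istar) {z : ℝ} (hz : (2 : ℝ) ^ (1 / α) ≤ z) :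
    ∑ j ∈ univ.erase i, (z + lam j) ^ (-α) ≤ 1 := by
  have hc : 0 < (2 : ℝ) ^ (1 / α) := by positivity
  have hstar_term : (z + lam istar) ^ (-α) ≤ 1 / 2 := by
    rw [hstar, add_zero]; exact rpow_neg_le_half hα hz
  have hrest : ∑ j ∈ (univ.erase i).erase istar, (z + lam j) ^ (-α) ≤ 1 / 2 :=
    calc ∑ j ∈ (univ.erase i).erase istar, (z + lam j) ^ (-α)
        ≤ ∑ j ∈ (univ.erase i).erase istar, ((2 : ℝ) ^ (1 / α) + lam j) ^ (-α) :=
          sum_le_sum fun j _ => rpow_le_rpow_of_nonpos (by linarith [hlam j])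
            (by linarith) (by linarith)
      _ ≤ ∑ j ∈ univ.erase istar, ((2 : ℝ) ^ (1 / α) + lam j) ^ (-α) := by
          refine sum_le_sum_of_subset_of_nonneg ?_ fun j _ _ => rpow_nonneg (by linarith [hlam j]) _
          rw [erase_right_comm]
          exact erase_subset _ _
      _ ≤ 1 / 2 := hD
  rw [← add_sum_erase _ _ (mem_erase.2 ⟨hi.symm, mem_univ _⟩)]
  linarith

theorem exp_neg_two_mul_le_argminIntegrand (hα : 0 < α) (hlam : ∀ j, 0 ≤ lam j) {istar : ι}
    (hstar : lam istar = 0)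
    (hD : ∑ j ∈ univ.erase istar, ((2 : ℝ) ^ (1 / α) + lam j) ^ (-α) ≤ 1 / 2)
    {i : ι} (hi : i ≠ istar) {z : ℝ} (hz : (2 : ℝ) ^ (1 / α) ≤ z) :
    exp (-2) * (α * (z + lam i) ^ (-(α + 1))) ≤ argminIntegrand α lam i z := by
  have hc : 0 < (2 : ℝ) ^ (1 / α) := by positivity
  have hprod : exp (-2) ≤ ∏ j ∈ univ.erase i, (1 - (z + lam j) ^ (-α)) :=
    calc exp (-2) ≤ exp (-(2 * ∑ j ∈ univ.erase i, (z + lam j) ^ (-α))) :=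
          exp_le_exp.2 (by linarith [sum_erase_rpow_neg_le_one hα hlam hstar hD hi hz])
      _ ≤ _ := exp_neg_two_mul_sum_le_prod_one_sub _
          (fun j _ => rpow_nonneg (by linarith [hlam j]) _)
          (fun j _ => rpow_neg_le_half hα (by linarith [hlam j]))
  rw [argminIntegrand, mul_comm]
  exact mul_le_mul_of_nonneg_left hprod (mul_nonneg hα.le (rpow_nonneg (by linarith [hlam i]) _))

end Argmin

theorem ftpl_pareto_prob_lower_bound_suboptimal_general
    (α : ℝ) (hα : 1 < α) (K : ℕ) (istar : Fin K)
    (lam : Fin K → ℝ) (hlam : ∀ j, 0 ≤ lam j) (hstar : lam istar = 0)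
    (hD : ∑ j ∈ Finset.univ.erase istar, ((2 : ℝ) ^ (1 / α) + lam j) ^ (-α) ≤ 1 / 2)
    (i : Fin K) (hi : i ≠ istar) :
    1 / (2 * Real.exp 2 * (1 + lam i) ^ α)
      ≤ ∫ z in Set.Ioi (1 : ℝ),
          α * (z + lam i) ^ (-(α + 1)) *
            ∏ j ∈ Finset.univ.erase i, (1 - (z + lam j) ^ (-α)) := by
  have hα0 : 0 < α := by linarith
  set c : ℝ := (2 : ℝ) ^ (1 / α)
  have hc : 1 ≤ c := one_le_rpow one_le_two (by positivity)
  have hcl : 0 < c + lam i := by linarith [hlam i]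
  calc 1 / (2 * exp 2 * (1 + lam i) ^ α)
      ≤ exp (-2) * (c + lam i) ^ (-α) := by
        rw [exp_neg, rpow_neg hcl.le, ← mul_inv, one_div]
        exact inv_anti₀ (by positivity) (by
          nlinarith [add_rpow_le_two_mul_one_add_rpow hα0 (hlam i), exp_pos 2])
    _ = ∫ z in Ioi c, exp (-2) * (α * (z + lam i) ^ (-(α + 1))) := by
        rw [integral_const_mul, integral_Ioi_mul_add_rpow_neg_add_one hα0 hcl]
    _ ≤ ∫ z in Ioi c, argminIntegrand α lam i z :=
        setIntegral_mono_on
          (((integrableOn_Ioi_add_rpow (by linarith) hcl).const_mul α).const_mul _)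
          ((integrableOn_argminIntegrand hα0 hlam i).mono_set (Ioi_subset_Ioi hc))
          measurableSet_Ioi
          fun z hz => exp_neg_two_mul_le_argminIntegrand hα0 hlam hstar hD hi (le_of_lt hz)
    _ ≤ ∫ z in Ioi 1, argminIntegrand α lam i z :=
        setIntegral_mono_set (integrableOn_argminIntegrand hα0 hlam i)
          (ae_restrict_of_forall_mem measurableSet_Ioi
            fun z hz => (argminIntegrand_mem_Icc hα0.le hlam i (le_of_lt hz)).1)
          (Ioi_subset_Ioi hc).eventuallyLE

/-- on the event `D_t` (optimal arm identified), the FTPL exploitation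
probability of every suboptimal arm is at least `1/(2e²(1+λ_i)^α)`. -/
theorem ftpl_pareto_prob_lower_bound_suboptimal
    (α : ℝ) (hα : 1 < α) (K : ℕ) (hK : 2 ≤ K) (istar : Fin K)
    (lam : Fin K → ℝ) (hlam : ∀ j, 0 ≤ lam j) (hstar : lam istar = 0)
    (hD : ∑ j ∈ Finset.univ.erase istar, ((2 : ℝ) ^ (1 / α) + lam j) ^ (-α) ≤ 1 / 2)
    (i : Fin K) (hi : i ≠ istar) :
    1 / (2 * Real.exp 2 * (1 + lam i) ^ α)
      ≤ ∫ z in Set.Ioi (1 : ℝ),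
          α * (z + lam i) ^ (-(α + 1)) *
            ∏ j ∈ Finset.univ.erase i, (1 - (z + lam j) ^ (-α)) :=
  ftpl_pareto_prob_lower_bound_suboptimal_general α hα K istar lam hlam hstar hD i hi
end

section
/- Let α > 1, K ≥ 2 an integer, i* ∈ {1,…,K}, and λ ∈ [0,∞)^K with λ_{i*} = 0 and ∑_{j≠i*} (2^{1/α}+λ_j)^{-α} ≤ 1/2. Then ∫_1^∞ α z^{-(α+1)} ∏_{j≠i*} (1 − (z+λ_j)^{-α}) dz ≥ 1/(2e). -/
/-!
Restrict the integral to `z ≥ c := 2 ^ (1 / α)`. There every factor `(z + λ_j) ^ (-α)` is at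
most `(c + λ_j) ^ (-α)`, so by the Weierstrass product inequality the product is at least
`1 - ∑ (c + λ_j) ^ (-α) ≥ 1 / 2`, while the Pareto tail mass beyond `c` is `c ^ (-α) = 1 / 2`.
Hence the integral is at least `1 / 4 ≥ 1 / (2e)`.
-/

open MeasureTheory Set

theorem Finset.one_sub_sum_le_prod_one_sub {ι R : Type*} [CommRing R] [LinearOrder R]
    [IsStrictOrderedRing R] (s : Finset ι) (f : ι → R) (h0 : ∀ i ∈ s, 0 ≤ f i)
    (h1 : ∀ i ∈ s, f i ≤ 1) : 1 - ∑ i ∈ s, f i ≤ ∏ i ∈ s, (1 - f i) := by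
  classical
  induction s using Finset.induction_on with
  | empty => simp
  | insert a s ha ih =>
    rw [Finset.sum_insert ha, Finset.prod_insert ha]
    have hfa : 0 ≤ 1 - f a := sub_nonneg.2 (h1 a (mem_insert_self a s))
    have hsum : 0 ≤ f a * ∑ i ∈ s, f i :=
      mul_nonneg (h0 a (mem_insert_self a s)) (sum_nonneg fun i hi ↦ h0 i (mem_insert_of_mem hi))
    calc 1 - (f a + ∑ i ∈ s, f i)
        ≤ (1 - f a) * (1 - ∑ i ∈ s, f i) := by linear_combination hsum
      _ ≤ (1 - f a) * ∏ i ∈ s, (1 - f i) :=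
        mul_le_mul_of_nonneg_left
          (ih (fun i hi ↦ h0 i (mem_insert_of_mem hi)) fun i hi ↦ h1 i (mem_insert_of_mem hi))
          hfa

theorem integral_Ioi_mul_rpow_neg_add_one {α c : ℝ} (hα : 0 < α) (hc : 0 < c) :
    ∫ z in Ioi c, α * z ^ (-(α + 1)) = c ^ (-α) := by
  rw [integral_const_mul, integral_Ioi_rpow_of_lt (by linarith) hc,
    show -(α + 1) + 1 = -α by ring]
  field_simp

section ParetoIntegral

variable {ι : Type*} (s : Finset ι) {α : ℝ} {lam : ι → ℝ}

theorem prod_one_sub_rpow_neg_mem_Icc (hα : 0 ≤ α) (hlam : ∀ j ∈ s, 0 ≤ lam j) {z : ℝ}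
    (hz : 1 ≤ z) : ∏ j ∈ s, (1 - (z + lam j) ^ (-α)) ∈ Icc 0 1 := by
  have hfac : ∀ j ∈ s, 0 ≤ 1 - (z + lam j) ^ (-α) ∧ 1 - (z + lam j) ^ (-α) ≤ 1 :=
    fun j hj ↦
      have hzj : 1 ≤ z + lam j := le_add_of_le_of_nonneg hz (hlam j hj)
      ⟨sub_nonneg.2 (Real.rpow_le_one_of_one_le_of_nonpos hzj (neg_nonpos.2 hα)),
        sub_le_self _ (Real.rpow_nonneg (by linarith) _)⟩
  exact ⟨Finset.prod_nonneg fun j hj ↦ (hfac j hj).1,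
    Finset.prod_le_one (fun j hj ↦ (hfac j hj).1) fun j hj ↦ (hfac j hj).2⟩

theorem one_sub_sum_rpow_neg_le_prod (hα : 0 ≤ α) (hlam : ∀ j ∈ s, 0 ≤ lam j) {c z : ℝ}
    (hc : 1 ≤ c) (hcz : c ≤ z) :
    1 - ∑ j ∈ s, (c + lam j) ^ (-α) ≤ ∏ j ∈ s, (1 - (z + lam j) ^ (-α)) := by
  have hzj : ∀ j ∈ s, 1 ≤ z + lam j := fun j hj ↦ by linarith [hlam j hj]
  calc 1 - ∑ j ∈ s, (c + lam j) ^ (-α)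
      ≤ 1 - ∑ j ∈ s, (z + lam j) ^ (-α) := by
        refine sub_le_sub_left (Finset.sum_le_sum fun j hj ↦ ?_) 1
        exact Real.rpow_le_rpow_of_nonpos (by linarith [hlam j hj]) (by linarith)
          (neg_nonpos.2 hα)
    _ ≤ ∏ j ∈ s, (1 - (z + lam j) ^ (-α)) :=
      Finset.one_sub_sum_le_prod_one_sub s _
        (fun j hj ↦ Real.rpow_nonneg (by linarith [hzj j hj]) _)
        fun j hj ↦ Real.rpow_le_one_of_one_le_of_nonpos (hzj j hj) (neg_nonpos.2 hα)

theorem integrableOn_Ioi_one_mul_rpow_mul_prod (hα : 0 < α) (hlam : ∀ j ∈ s, 0 ≤ lam j) :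
    IntegrableOn (fun z ↦ α * z ^ (-(α + 1)) * ∏ j ∈ s, (1 - (z + lam j) ^ (-α)))
      (Ioi 1) := by
  have hdens : IntegrableOn (fun z : ℝ ↦ z ^ (-(α + 1))) (Ioi 1) :=
    integrableOn_Ioi_rpow_of_lt (by linarith) one_pos
  refine (hdens.const_mul α).mono' (by fun_prop)
    ((ae_restrict_mem measurableSet_Ioi).mono fun z (hz : 1 < z) ↦ ?_)
  have hP := prod_one_sub_rpow_neg_mem_Icc s hα.le hlam hz.le
  have hg : 0 ≤ α * z ^ (-(α + 1)) := mul_nonneg hα.le (Real.rpow_nonneg (by linarith) _)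
  rw [Real.norm_eq_abs, abs_of_nonneg (mul_nonneg hg hP.1)]
  exact mul_le_of_le_one_right hg hP.2

theorem rpow_neg_mul_one_sub_sum_le_integral (hα : 0 < α) (hlam : ∀ j ∈ s, 0 ≤ lam j)
    {c : ℝ} (hc : 1 ≤ c) :
    c ^ (-α) * (1 - ∑ j ∈ s, (c + lam j) ^ (-α))
      ≤ ∫ z in Ioi 1, α * z ^ (-(α + 1)) * ∏ j ∈ s, (1 - (z + lam j) ^ (-α)) := by
  have hint := integrableOn_Ioi_one_mul_rpow_mul_prod s hα hlam
  calc c ^ (-α) * (1 - ∑ j ∈ s, (c + lam j) ^ (-α))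
      = ∫ z in Ioi c, α * z ^ (-(α + 1)) * (1 - ∑ j ∈ s, (c + lam j) ^ (-α)) := by
        rw [integral_mul_const, integral_Ioi_mul_rpow_neg_add_one hα (by linarith)]
    _ ≤ ∫ z in Ioi c, α * z ^ (-(α + 1)) * ∏ j ∈ s, (1 - (z + lam j) ^ (-α)) := by
        refine setIntegral_mono_on
          (((integrableOn_Ioi_rpow_of_lt (by linarith) (by linarith)).const_mul α).mul_const _)
          (hint.mono_set (Ioi_subset_Ioi hc)) measurableSet_Ioi fun z (hz : c < z) ↦ ?_
        exact mul_le_mul_of_nonneg_left (one_sub_sum_rpow_neg_le_prod s hα.le hlam hc hz.le)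
          (mul_nonneg hα.le (Real.rpow_nonneg (by linarith) _))
    _ ≤ ∫ z in Ioi 1, α * z ^ (-(α + 1)) * ∏ j ∈ s, (1 - (z + lam j) ^ (-α)) :=
        setIntegral_mono_set hint
          ((ae_restrict_mem measurableSet_Ioi).mono fun z (hz : 1 < z) ↦
            mul_nonneg (mul_nonneg hα.le (Real.rpow_nonneg (by linarith) _))
              (prod_one_sub_rpow_neg_mem_Icc s hα.le hlam hz.le).1)
          (Ioi_subset_Ioi hc).eventuallyLE

end ParetoIntegral

theorem ftpl_pareto_prob_lower_bound_optimal_general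
    (α : ℝ) (hα : 1 < α) (K : ℕ) (istar : Fin K)
    (lam : Fin K → ℝ) (hlam : ∀ j, 0 ≤ lam j)
    (hD : ∑ j ∈ Finset.univ.erase istar, ((2 : ℝ) ^ (1 / α) + lam j) ^ (-α) ≤ 1 / 2) :
    1 / (2 * Real.exp 1)
      ≤ ∫ z in Set.Ioi (1 : ℝ),
          α * z ^ (-(α + 1)) *
            ∏ j ∈ Finset.univ.erase istar, (1 - (z + lam j) ^ (-α)) := by
  have hα0 : 0 < α := by linarith
  have hc : 1 ≤ (2 : ℝ) ^ (1 / α) := Real.one_le_rpow (by norm_num) (by positivity)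
  have htail : ((2 : ℝ) ^ (1 / α)) ^ (-α) = 1 / 2 := by
    rw [← Real.rpow_mul zero_le_two, show 1 / α * -α = -1 by field_simp, Real.rpow_neg_one,
      one_div]
  have he : 2 ≤ Real.exp 1 := by linarith [Real.add_one_le_exp 1]
  calc 1 / (2 * Real.exp 1) ≤ 1 / 2 * (1 - 1 / 2) := by
        rw [div_le_iff₀ (by positivity)]; nlinarith
    _ ≤ ((2 : ℝ) ^ (1 / α)) ^ (-α) * (1 - ∑ j ∈ Finset.univ.erase istar,
          ((2 : ℝ) ^ (1 / α) + lam j) ^ (-α)) := by rw [htail]; gcongr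
    _ ≤ _ := rpow_neg_mul_one_sub_sum_le_integral _ hα0 (fun j _ ↦ hlam j) hc

/-- on the event `D_t`, the FTPL exploitation probability of the optimal arm
is at least `1/(2e)`. -/
theorem ftpl_pareto_prob_lower_bound_optimal
    (α : ℝ) (hα : 1 < α) (K : ℕ) (hK : 2 ≤ K) (istar : Fin K)
    (lam : Fin K → ℝ) (hlam : ∀ j, 0 ≤ lam j) (hstar : lam istar = 0)
    (hD : ∑ j ∈ Finset.univ.erase istar, ((2 : ℝ) ^ (1 / α) + lam j) ^ (-α) ≤ 1 / 2) :
    1 / (2 * Real.exp 1)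
      ≤ ∫ z in Set.Ioi (1 : ℝ),
          α * z ^ (-(α + 1)) *
            ∏ j ∈ Finset.univ.erase istar, (1 - (z + lam j) ^ (-α)) :=
  ftpl_pareto_prob_lower_bound_optimal_general α hα K istar lam hlam hD
end

section
/- Let α > 1, K ≥ 2 an integer, i* ∈ {1,…,K}, and λ ∈ ℝ^K. Let r = (r_1,…,r_K) have i.i.d. Pareto components with shape α (density α x^{-(α+1)} on [1,∞)), and let I(r) denote the index i minimizing λ_i − r_i, which is unique almost surely. Then E[r_{I(r)} − r_{i*}] ≤ (α/(α−1)) ∑_{i≠i*} (1 + λ̲_i)^{-(α−1)}, where λ̲ := λ − (min_j λ_j)·𝟏. -/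
/-!
On the event that `I r` minimises `λ_i − r_i`, comparing with a minimiser `j₀` of `λ` gives
`r_{I r} ≥ r_{j₀} + λ_{I r} − λ_{j₀} ≥ 1 + λ̲_{I r}`, since Pareto variables are at least `1`.
Hence `r_{I r} − r_{i*}` is at most `r_{I r}` when `I r ≠ i*` and `0` otherwise, so it is
dominated by `∑_{i ≠ i*} r_i 𝟙[r_i ≥ 1 + λ̲_i]`, and each truncated Pareto mean is
`∫_t^∞ x · α x^{-(α+1)} dx = α/(α−1) · t^{-(α−1)}`.
-/

open MeasureTheory ProbabilityTheory Real Set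
open scoped ENNReal

namespace ProbabilityTheory

variable {s α t : ℝ}

lemma ae_le_paretoMeasure (s α : ℝ) : ∀ᵐ x ∂paretoMeasure s α, s ≤ x := by
  rw [ae_iff, show {x | ¬s ≤ x} = Iio s by ext; simp, paretoMeasure,
    withDensity_apply _ measurableSet_Iio, lintegral_paretoPDF_of_le le_rfl]

lemma paretoMeasure_eq_withDensity_toNNReal (s α : ℝ) :
    paretoMeasure s α = volume.withDensity fun x ↦ ((paretoPDFReal s α x).toNNReal : ℝ≥0∞) :=
  rfl

lemma paretoPDFReal_toNNReal_smul_self (hs : 0 < s) (hα : 0 ≤ α) {x : ℝ} (hx : s ≤ x) :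
    (paretoPDFReal s α x).toNNReal • x = α * s ^ α * x ^ (-α) := by
  have hx₀ : 0 < x := hs.trans_le hx
  rw [NNReal.smul_def, smul_eq_mul, Real.coe_toNNReal _ (paretoPDFReal_nonneg hs.le hα x),
    paretoPDFReal, if_pos hx, mul_assoc, ← rpow_add_one hx₀.ne']
  ring_nf

lemma integrableOn_Ici_id_paretoMeasure (hs : 0 < s) (hα : 1 < α) (hst : s ≤ t) :
    IntegrableOn id (Ici t) (paretoMeasure s α) := by
  rw [IntegrableOn, paretoMeasure_eq_withDensity_toNNReal, restrict_withDensity measurableSet_Ici,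
    integrable_withDensity_iff_integrable_smul (measurable_paretoPDFReal s α).real_toNNReal]
  have hpow : IntegrableOn (fun x ↦ α * s ^ α * x ^ (-α)) (Ici t) :=
    Iff.mpr integrableOn_Ici_iff_integrableOn_Ioi
      ((integrableOn_Ioi_rpow_of_lt (by linarith) (hs.trans_le hst)).const_mul _)
  exact hpow.congr_fun (fun x hx ↦
    (paretoPDFReal_toNNReal_smul_self hs (by linarith) (hst.trans hx)).symm) measurableSet_Ici

lemma setIntegral_Ici_id_paretoMeasure (hs : 0 < s) (hα : 1 < α) (hst : s ≤ t) :
    ∫ x in Ici t, x ∂paretoMeasure s α = α * s ^ α / (α - 1) * t ^ (-(α - 1)) := by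
  rw [paretoMeasure_eq_withDensity_toNNReal,
    setIntegral_withDensity_eq_setIntegral_smul (measurable_paretoPDFReal s α).real_toNNReal _
      measurableSet_Ici,
    setIntegral_congr_fun measurableSet_Ici
      (fun x hx ↦ paretoPDFReal_toNNReal_smul_self hs (by linarith) (hst.trans hx)),
    integral_Ici_eq_integral_Ioi, integral_const_mul,
    integral_Ioi_rpow_of_lt (by linarith) (hs.trans_le hst), neg_add_eq_sub, ← neg_sub α 1]
  field_simp [show α - 1 ≠ 0 by linarith]

section Pi

variable {ι : Type*} [Fintype ι]

lemma integrable_indicator_Ici_eval_pi_paretoMeasure (hs : 0 < s) (hα : 1 < α) (hst : s ≤ t)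
    (i : ι) : Integrable (fun r : ι → ℝ ↦ (Ici t).indicator id (r i))
      (Measure.pi fun _ ↦ paretoMeasure s α) :=
  have := isProbabilityMeasure_paretoMeasure hs (zero_lt_one.trans hα)
  integrable_comp_eval <|
    (integrableOn_Ici_id_paretoMeasure hs hα hst).integrable_indicator measurableSet_Ici

lemma integral_indicator_Ici_eval_pi_paretoMeasure (hs : 0 < s) (hα : 1 < α) (hst : s ≤ t)
    (i : ι) : ∫ r : ι → ℝ, (Ici t).indicator id (r i) ∂Measure.pi (fun _ ↦ paretoMeasure s α)
      = α * s ^ α / (α - 1) * t ^ (-(α - 1)) := by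
  have := isProbabilityMeasure_paretoMeasure hs (zero_lt_one.trans hα)
  rw [integral_comp_eval (μ := fun _ ↦ paretoMeasure s α) (f := (Ici t).indicator id)
      (measurable_id.indicator measurableSet_Ici).aestronglyMeasurable,
    integral_indicator measurableSet_Ici]
  exact setIntegral_Ici_id_paretoMeasure hs hα hst

end Pi

end ProbabilityTheory

namespace MeasureTheory

variable {X : Type*} [MeasurableSpace X] {μ : Measure X} {f g : X → ℝ}

lemma integral_le_of_ae_le_of_nonneg (hg : Integrable g μ) (hg₀ : 0 ≤ᵐ[μ] g)
    (hfg : f ≤ᵐ[μ] g) : ∫ x, f x ∂μ ≤ ∫ x, g x ∂μ := by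
  by_cases hf : Integrable f μ
  · exact integral_mono_ae hf hg hfg
  · rw [integral_undef hf]
    exact integral_nonneg_of_ae hg₀

end MeasureTheory

section Gap

variable {ι : Type*}

lemma one_add_sub_ciInf_le [Finite ι] {lam r : ι → ℝ} {k : ι} (hr : ∀ i, 1 ≤ r i)
    (hk : ∀ j, lam k - r k ≤ lam j - r j) : 1 + (lam k - ⨅ j, lam j) ≤ r k := by
  have : Nonempty ι := ⟨k⟩
  obtain ⟨j₀, hj₀⟩ := exists_eq_ciInf_of_finite (f := lam)
  linarith [hk j₀, hr j₀]

lemma sub_le_sum_erase_indicator_Ici [Fintype ι] [DecidableEq ι] {r t : ι → ℝ} {k i₀ : ι}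
    (hr : ∀ i, 0 ≤ r i) (hk : t k ≤ r k) :
    r k - r i₀ ≤ ∑ i ∈ Finset.univ.erase i₀, (Ici (t i)).indicator id (r i) := by
  have hterm : ∀ i, 0 ≤ (Ici (t i)).indicator id (r i) := fun i ↦
    indicator_apply_nonneg fun _ ↦ hr i
  by_cases hki : k = i₀
  · rw [hki, sub_self]
    exact Finset.sum_nonneg fun i _ ↦ hterm i
  · calc r k - r i₀ ≤ (Ici (t k)).indicator id (r k) := by
          rw [indicator_of_mem (show r k ∈ Ici (t k) from hk), id]
          linarith [hr i₀]
      _ ≤ _ := Finset.single_le_sum (fun i _ ↦ hterm i) (by simp [hki])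

end Gap

theorem ftpl_pareto_penalty_gap_bound_general
    (α : ℝ) (hα : 1 < α) (K : ℕ) (istar : Fin K) (lam : Fin K → ℝ)
    (I : (Fin K → ℝ) → Fin K)
    (hmin : ∀ᵐ r ∂(Measure.pi fun _ : Fin K => paretoMeasure 1 α),
      ∀ j, lam (I r) - r (I r) ≤ lam j - r j) :
    (∫ r, (r (I r) - r istar) ∂(Measure.pi fun _ : Fin K => paretoMeasure 1 α))
      ≤ α / (α - 1) *
          ∑ i ∈ Finset.univ.erase istar,
            (1 + (lam i - ⨅ j, lam j)) ^ (-(α - 1)) := by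
  have := isProbabilityMeasure_paretoMeasure one_pos (zero_lt_one.trans hα)
  set P := Measure.pi fun _ : Fin K => paretoMeasure 1 α
  set t : Fin K → ℝ := fun i ↦ 1 + (lam i - ⨅ j, lam j)
  have ht : ∀ i, 1 ≤ t i := fun i ↦ by
    linarith [ciInf_le (finite_range lam).bddBelow i]
  have hr : ∀ᵐ r ∂P, ∀ i, 1 ≤ r i := Filter.eventually_all.2 fun i ↦
    Measure.tendsto_eval_ae_ae.eventually (ae_le_paretoMeasure 1 α)
  have hint i := integrable_indicator_Ici_eval_pi_paretoMeasure one_pos hα (ht i) i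
  calc ∫ r, (r (I r) - r istar) ∂P
      ≤ ∫ r, ∑ i ∈ Finset.univ.erase istar, (Ici (t i)).indicator id (r i) ∂P := by
        refine integral_le_of_ae_le_of_nonneg (integrable_finsetSum _ fun i _ ↦ hint i) ?_ ?_
        · filter_upwards [hr] with r hr
          exact Finset.sum_nonneg fun i _ ↦ indicator_apply_nonneg fun _ ↦ zero_le_one.trans (hr i)
        · filter_upwards [hmin, hr] with r hmin hr
          exact sub_le_sum_erase_indicator_Ici (fun i ↦ zero_le_one.trans (hr i))
            (one_add_sub_ciInf_le hr hmin)
    _ = α / (α - 1) * ∑ i ∈ Finset.univ.erase istar, t i ^ (-(α - 1)) := by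
        rw [integral_finsetSum _ fun i _ ↦ hint i, Finset.mul_sum]
        refine Finset.sum_congr rfl fun i _ ↦ ?_
        rw [integral_indicator_Ici_eval_pi_paretoMeasure one_pos hα (ht i), one_rpow, mul_one]

/-- penalty bound, gap-dependent form. If `I r` selects the (a.s. unique)
minimizer of `λ_i − r_i` under i.i.d. Pareto(α) perturbations, then
`E[r_{I(r)} − r_{i*}] ≤ (α/(α−1)) ∑_{i≠i*} (1+λ̲_i)^{-(α−1)}`. -/
theorem ftpl_pareto_penalty_gap_bound
    (α : ℝ) (hα : 1 < α) (K : ℕ) (hK : 2 ≤ K) (istar : Fin K) (lam : Fin K → ℝ)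
    (I : (Fin K → ℝ) → Fin K) (hI : Measurable I)
    (hmin : ∀ᵐ r ∂(Measure.pi fun _ : Fin K => paretoMeasure 1 α),
      ∀ j, lam (I r) - r (I r) ≤ lam j - r j) :
    (∫ r, (r (I r) - r istar) ∂(Measure.pi fun _ : Fin K => paretoMeasure 1 α))
      ≤ α / (α - 1) *
          ∑ i ∈ Finset.univ.erase istar,
            (1 + (lam i - ⨅ j, lam j)) ^ (-(α - 1)) :=
  ftpl_pareto_penalty_gap_bound_general α hα K istar lam I hmin
end

section
/- Let α > 1, x ∈ [0,1], and i ≥ 1 an integer. Then ∫_0^x t^{1/α} (1−t)^{i−1} dt ≤ (e / i^{1+1/α}) ∫_0^{x·i} s^{1/α} e^{-s} ds; in other words, B(x; 1+1/α, i) ≤ (e / i^{1+1/α}) γ(1+1/α, x·i), where B(x; a, b) := ∫_0^x t^{a−1}(1−t)^{b−1} dt is the incomplete Beta function and γ(a, y) := ∫_0^y s^{a−1} e^{-s} ds is the lower incomplete Gamma function. -/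
/-!
On `[0, 1]` we have `(1 - t)^(i-1) ≤ e^{-t(i-1)} ≤ e · e^{-ti}`, so the Beta integrand is
dominated by `e · t^{1/α} e^{-ti}`; the substitution `s = ti` turns the integral of the latter
into `i^{-(1+1/α)}` times the lower incomplete Gamma integral up to `xi`.
-/

open Real intervalIntegral

theorem one_sub_pow_pred_le_exp_one_mul {t : ℝ} (ht : t ≤ 1) {n : ℕ} (hn : 1 ≤ n) :
    (1 - t) ^ (n - 1) ≤ exp 1 * exp (-(t * n)) :=
  calc (1 - t) ^ (n - 1) ≤ exp (-t) ^ (n - 1) :=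
        pow_le_pow_left₀ (by linarith) (one_sub_le_exp_neg t) _
    _ = exp (t + -(t * n)) := by rw [← exp_nat_mul, Nat.cast_sub hn]; ring_nf
    _ ≤ exp 1 * exp (-(t * n)) := by rw [← exp_add]; gcongr

theorem integral_rpow_mul_one_sub_pow_pred_le {p x : ℝ} (hp : 0 ≤ p) (hx0 : 0 ≤ x)
    (hx1 : x ≤ 1) {n : ℕ} (hn : 1 ≤ n) :
    ∫ t in 0..x, t ^ p * (1 - t) ^ (n - 1) ≤ exp 1 * ∫ t in 0..x, t ^ p * exp (-(t * n)) := by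
  have hrpow : Continuous fun t : ℝ => t ^ p := continuous_rpow_const hp
  rw [← integral_const_mul]
  refine integral_mono_on hx0 ((hrpow.mul (by fun_prop)).intervalIntegrable _ _)
    ((continuous_const.mul (hrpow.mul (by fun_prop))).intervalIntegrable _ _) fun t ht => ?_
  calc t ^ p * (1 - t) ^ (n - 1) ≤ t ^ p * (exp 1 * exp (-(t * n))) :=
        mul_le_mul_of_nonneg_left (one_sub_pow_pred_le_exp_one_mul (ht.2.trans hx1) hn)
          (rpow_nonneg ht.1 p)
    _ = exp 1 * (t ^ p * exp (-(t * n))) := by ring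

theorem integral_rpow_mul_exp_neg_mul {p c x : ℝ} (hc : 0 < c) (hx : 0 ≤ x) :
    ∫ t in 0..x, t ^ p * exp (-(t * c)) = (c ^ (p + 1))⁻¹ * ∫ s in 0..x * c, s ^ p * exp (-s) := by
  have hsubst : ∫ t in 0..x, (t * c) ^ p * exp (-(t * c))
      = c⁻¹ * ∫ s in 0..x * c, s ^ p * exp (-s) := by
    simpa using integral_comp_mul_right (a := 0) (b := x) (fun s => s ^ p * exp (-s)) hc.ne'
  have hsplit : ∫ t in 0..x, (t * c) ^ p * exp (-(t * c))
      = c ^ p * ∫ t in 0..x, t ^ p * exp (-(t * c)) := by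
    rw [← integral_const_mul]
    refine integral_congr fun t ht => ?_
    rw [Set.uIcc_of_le hx] at ht
    simp only [mul_rpow ht.1 hc.le]
    ring
  rw [rpow_add_one hc.ne', mul_inv, mul_assoc, ← hsubst, hsplit, ← mul_assoc,
    inv_mul_cancel₀ (rpow_pos_of_pos hc p).ne', one_mul]

/-- incomplete Beta vs lower incomplete Gamma.
`B(x; 1+1/α, i) ≤ (e / i^{1+1/α}) γ(1+1/α, x·i)`. -/
theorem incBeta_le_incGamma
    (α : ℝ) (hα : 1 < α) (x : ℝ) (hx0 : 0 ≤ x) (hx1 : x ≤ 1) (i : ℕ) (hi : 1 ≤ i) :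
    (∫ t in (0 : ℝ)..x, t ^ (1 / α) * (1 - t) ^ (i - 1))
      ≤ (Real.exp 1 / (i : ℝ) ^ (1 + 1 / α)) *
          ∫ s in (0 : ℝ)..(x * i), s ^ (1 / α) * Real.exp (-s) := by
  have hp : 0 ≤ 1 / α := (one_div_pos.2 (by linarith)).le
  have hi0 : (0 : ℝ) < i := by exact_mod_cast hi
  calc _ ≤ exp 1 * ∫ t in 0..x, t ^ (1 / α) * exp (-(t * i)) :=
        integral_rpow_mul_one_sub_pow_pred_le hp hx0 hx1 hi
    _ = _ := by
        rw [integral_rpow_mul_exp_neg_mul hi0 hx0, add_comm, ← mul_assoc, div_eq_mul_inv (exp 1)]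
end

section
/- Let α > 1, u ≥ 0, and i ≥ 1 an integer. Then ∫_0^∞ (z+u+1)^{-(α+2)} (1 − (z+u+1)^{-α})^{i−1} dz ≤ e / (α · i^{1+1/α}). -/
/-!
With `w = z + u + 1 ≥ 1` and `t = w ^ (-α) ∈ (0, 1]`, the elementary bound
`(1 - t) ^ (i - 1) ≤ exp (-(i - 1) t) ≤ e · exp (-i t)` dominates the integrand by
`e · w ^ (-(α + 2)) exp (-i w ^ (-α))`. Extending the range of integration to `w > 0` and
substituting `y = w ^ (-α)` turns this into the Gamma integral `e · Γ(1 + 1/α) / (α i ^ (1 + 1/α))`,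
and `Γ ≤ 1` on `[1, 2]` by convexity, as `Γ(1) = Γ(2) = 1`.
-/

open MeasureTheory Set Real

theorem Real.Gamma_le_one_of_mem_Icc {s : ℝ} (hs : s ∈ Icc 1 2) : Gamma s ≤ 1 := by
  simpa [Gamma_one, Gamma_two] using
    convexOn_Gamma.le_max_of_mem_Icc (mem_Ioi.mpr one_pos) (mem_Ioi.mpr two_pos) hs

theorem one_sub_pow_le_exp_one_sub_mul {t : ℝ} (ht : t ≤ 1) (n : ℕ) :
    (1 - t) ^ n ≤ exp (1 - (n + 1) * t) :=
  calc (1 - t) ^ n ≤ exp (-t) ^ n :=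
        pow_le_pow_left₀ (by linarith) (by linarith [add_one_le_exp (-t)]) n
    _ = exp (n * -t) := (exp_nat_mul _ _).symm
    _ ≤ exp (1 - (n + 1) * t) := exp_le_exp.mpr (by linarith)

section RpowOneSubRpow

variable {a p w : ℝ}

theorem rpow_mul_one_sub_rpow_neg_pow_nonneg (ha : 0 ≤ a) (hw : 1 ≤ w) (n : ℕ) :
    0 ≤ w ^ p * (1 - w ^ (-a)) ^ n :=
  mul_nonneg (rpow_nonneg (by linarith) _)
    (pow_nonneg (sub_nonneg.mpr (rpow_le_one_of_one_le_of_nonpos hw (by linarith))) _)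

theorem rpow_mul_one_sub_rpow_neg_pow_le (ha : 0 ≤ a) (hw : 1 ≤ w) (n : ℕ) :
    w ^ p * (1 - w ^ (-a)) ^ n ≤ exp 1 * (w ^ p * exp (-(n + 1) * w ^ (-a))) := by
  rw [mul_left_comm, ← exp_add, neg_mul, ← sub_eq_add_neg]
  exact mul_le_mul_of_nonneg_left
    (one_sub_pow_le_exp_one_sub_mul (rpow_le_one_of_one_le_of_nonpos hw (by linarith)) n)
    (rpow_nonneg (by linarith) _)

end RpowOneSubRpow

section TranslateIoi

variable {E : Type*} [NormedAddCommGroup E]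

theorem integrableOn_Ioi_comp_add_right_iff (g : ℝ → E) (a c : ℝ) :
    IntegrableOn (fun z => g (z + c)) (Ioi a) ↔ IntegrableOn g (Ioi (a + c)) := by
  have h := (measurePreserving_add_right volume c).integrableOn_comp_preimage
    (measurableEmbedding_addRight c) (f := g) (s := Ioi (a + c))
  rwa [preimage_add_const_Ioi, add_sub_cancel_right] at h

theorem setIntegral_Ioi_comp_add_right [NormedSpace ℝ E] (g : ℝ → E) (a c : ℝ) :
    ∫ z in Ioi a, g (z + c) = ∫ w in Ioi (a + c), g w := by
  have h := (measurePreserving_add_right volume c).setIntegral_preimage_emb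
    (measurableEmbedding_addRight c) g (Ioi (a + c))
  rwa [preimage_add_const_Ioi, add_sub_cancel_right] at h

end TranslateIoi

theorem setIntegral_Ioi_le_mul_of_le_mul_comp_add {f g : ℝ → ℝ} {a c C : ℝ} (hc : 0 ≤ c)
    (hC : 0 ≤ C) (hg : IntegrableOn g (Ioi a)) (hg₀ : ∀ w ∈ Ioi a, 0 ≤ g w)
    (hf₀ : ∀ z ∈ Ioi a, 0 ≤ f z) (hfg : ∀ z ∈ Ioi a, f z ≤ C * g (z + c)) :
    ∫ z in Ioi a, f z ≤ C * ∫ w in Ioi a, g w := by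
  have hsub : Ioi (a + c) ⊆ Ioi a := Ioi_subset_Ioi (by linarith)
  have hg_shift : IntegrableOn (fun z => g (z + c)) (Ioi a) :=
    (integrableOn_Ioi_comp_add_right_iff g a c).mpr (hg.mono_set hsub)
  calc ∫ z in Ioi a, f z ≤ ∫ z in Ioi a, C * g (z + c) :=
        integral_mono_of_nonneg ((ae_restrict_iff' measurableSet_Ioi).mpr (ae_of_all _ hf₀))
          (hg_shift.const_mul C) ((ae_restrict_iff' measurableSet_Ioi).mpr (ae_of_all _ hfg))
    _ = C * ∫ w in Ioi (a + c), g w := by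
        rw [integral_const_mul, setIntegral_Ioi_comp_add_right]
    _ ≤ C * ∫ w in Ioi a, g w := mul_le_mul_of_nonneg_left
        (setIntegral_mono_set hg ((ae_restrict_iff' measurableSet_Ioi).mpr (ae_of_all _ hg₀))
          hsub.eventuallyLE) hC

section GammaIntegral

variable {a q b : ℝ}

theorem rpow_mul_exp_neg_mul_rpow_neg_eq_smul (ha : 0 < a) {x : ℝ} (hx : 0 < x) :
    x ^ (-(a * (q + 1) + 1)) * exp (-b * x ^ (-a)) =
      (|-a| * x ^ (-a - 1)) • (a⁻¹ * ((x ^ (-a)) ^ q * exp (-b * x ^ (-a)))) := by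
  rw [smul_eq_mul, abs_neg, abs_of_pos ha, ← rpow_mul hx.le]
  have hsum : -a - 1 + -a * q = -(a * (q + 1) + 1) := by ring
  calc x ^ (-(a * (q + 1) + 1)) * exp (-b * x ^ (-a))
      = (a * a⁻¹) * (x ^ (-a - 1) * x ^ (-a * q)) * exp (-b * x ^ (-a)) := by
        rw [mul_inv_cancel₀ ha.ne', one_mul, ← rpow_add hx, hsum]
    _ = _ := by ring

theorem integrableOn_rpow_mul_exp_neg_mul_rpow_neg (ha : 0 < a) (hq : -1 < q) (hb : 0 < b) :
    IntegrableOn (fun x : ℝ => x ^ (-(a * (q + 1) + 1)) * exp (-b * x ^ (-a))) (Ioi 0) := by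
  have hf : IntegrableOn (fun y : ℝ => a⁻¹ * (y ^ q * exp (-b * y))) (Ioi 0) := by
    have h := integrableOn_rpow_mul_exp_neg_mul_rpow hq one_pos hb
    simp only [rpow_one] at h
    exact h.const_mul a⁻¹
  refine ((integrableOn_Ioi_comp_rpow_iff _ (neg_ne_zero.mpr ha.ne')).mpr hf).congr_fun
    (fun x hx => ?_) measurableSet_Ioi
  exact (rpow_mul_exp_neg_mul_rpow_neg_eq_smul ha hx).symm

theorem integral_rpow_mul_exp_neg_mul_rpow_neg (ha : 0 < a) (hq : -1 < q) (hb : 0 < b) :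
    ∫ x in Ioi (0 : ℝ), x ^ (-(a * (q + 1) + 1)) * exp (-b * x ^ (-a)) =
      Gamma (q + 1) / (a * b ^ (q + 1)) := by
  rw [setIntegral_congr_fun measurableSet_Ioi
      (fun x hx => rpow_mul_exp_neg_mul_rpow_neg_eq_smul ha hx),
    integral_comp_rpow_Ioi (fun y => a⁻¹ * (y ^ q * exp (-b * y))) (neg_ne_zero.mpr ha.ne'),
    integral_const_mul]
  have h := integral_rpow_mul_exp_neg_mul_rpow one_pos hq hb
  simp only [rpow_one, div_one, mul_one] at h
  rw [h, rpow_neg hb.le]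
  field_simp

end GammaIntegral

/-- first bound on the stability integral `I_{i,α+2}`:
`∫_0^∞ (z+u+1)^{-(α+2)} (1−(z+u+1)^{-α})^{i−1} dz ≤ e/(α i^{1+1/α})`. -/
theorem ftpl_pareto_stability_integral_first_bound
    (α : ℝ) (hα : 1 < α) (u : ℝ) (hu : 0 ≤ u) (i : ℕ) (hi : 1 ≤ i) :
    (∫ z in Set.Ioi (0 : ℝ),
        (z + u + 1) ^ (-(α + 2)) * (1 - (z + u + 1) ^ (-α)) ^ (i - 1))
      ≤ Real.exp 1 / (α * (i : ℝ) ^ (1 + 1 / α)) := by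
  obtain ⟨n, rfl⟩ : ∃ n, i = n + 1 := ⟨i - 1, by omega⟩
  have hα₀ : 0 < α := by linarith
  have hq : -1 < 1 / α := by linarith [one_div_pos.mpr hα₀]
  have hn : (0 : ℝ) < (n + 1 : ℕ) := Nat.cast_pos.mpr n.succ_pos
  have hexp : α * (1 / α + 1) + 1 = α + 2 := by field_simp; ring
  have hw : ∀ z ∈ Ioi (0 : ℝ), 1 ≤ z + u + 1 := fun z hz => by linarith [mem_Ioi.mp hz]
  have hΓ : Gamma (1 / α + 1) ≤ 1 :=
    Gamma_le_one_of_mem_Icc ⟨by linarith [one_div_pos.mpr hα₀], by linarith [(div_lt_one hα₀).mpr hα]⟩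
  calc _ ≤ exp 1 * ∫ w in Ioi (0 : ℝ),
        w ^ (-(α * (1 / α + 1) + 1)) * exp (-((n + 1 : ℕ) : ℝ) * w ^ (-α)) := by
        refine setIntegral_Ioi_le_mul_of_le_mul_comp_add (by linarith : (0 : ℝ) ≤ u + 1)
          (exp_pos 1).le (integrableOn_rpow_mul_exp_neg_mul_rpow_neg hα₀ hq hn)
          (fun w hw => by have := mem_Ioi.mp hw; positivity)
          (fun z hz => rpow_mul_one_sub_rpow_neg_pow_nonneg hα₀.le (hw z hz) _) (fun z hz => ?_)
        rw [Nat.add_sub_cancel, ← add_assoc, hexp, Nat.cast_add_one]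
        exact rpow_mul_one_sub_rpow_neg_pow_le hα₀.le (hw z hz) n
    _ = exp 1 * (Gamma (1 / α + 1) / (α * ((n + 1 : ℕ) : ℝ) ^ (1 / α + 1))) := by
        rw [integral_rpow_mul_exp_neg_mul_rpow_neg hα₀ hq hn]
    _ ≤ exp 1 / (α * ((n + 1 : ℕ) : ℝ) ^ (1 + 1 / α)) := by
        rw [add_comm 1, ← mul_div_assoc]
        exact div_le_div_of_nonneg_right (mul_le_of_le_one_right (exp_pos 1).le hΓ)
          (mul_pos hα₀ (rpow_pos_of_pos hn _)).le
end

section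
/- Let α > 1. Then ∫_0^1 t^{-1/α} e^{-t} dt ≤ ((1 + e^{-1})α² − e^{-1}α) / ((α−1)(2α−1)); that is, the lower incomplete Gamma function satisfies γ(1 − 1/α, 1) ≤ ((1+e^{-1})α² − e^{-1}α) / ((α−1)(2α−1)). -/
/-!
On `[0, 1]` the convex function `e^{-t}` lies below its chord `1 + (e^{-1} - 1) t`, so the
integral is at most `∫_0^1 t^r (1 + (e^{-1} - 1) t) dt = 1/(r+1) + (e^{-1} - 1)/(r+2)`, which for
`r = -1/α` is the stated rational function of `α`.
-/

open Real intervalIntegral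

lemma Real.exp_mul_le_one_add_mul {t : ℝ} (ht₀ : 0 ≤ t) (ht₁ : t ≤ 1) (a : ℝ) :
    exp (t * a) ≤ 1 + (exp a - 1) * t :=
  calc exp (t * a) = exp ((1 - t) * 0 + t * a) := by ring_nf
    _ ≤ (1 - t) * exp 0 + t * exp a :=
        convexOn_exp.2 (Set.mem_univ _) (Set.mem_univ _) (by linarith) ht₀ (by ring)
    _ = 1 + (exp a - 1) * t := by rw [exp_zero]; ring

lemma integral_rpow_mul_one_add_mul {r : ℝ} (hr : -1 < r) (c : ℝ) :
    ∫ t in (0 : ℝ)..1, t ^ r * (1 + c * t) = 1 / (r + 1) + c / (r + 2) := by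
  have hsplit : ∀ t ∈ Set.uIcc (0 : ℝ) 1, t ^ r * (1 + c * t) = t ^ r + c * t ^ (r + 1) := by
    intro t ht
    rw [Set.uIcc_of_le zero_le_one] at ht
    rw [rpow_add_one' ht.1 (by linarith)]
    ring
  rw [integral_congr hsplit, integral_add (intervalIntegrable_rpow' hr)
    ((intervalIntegrable_rpow' (by linarith)).const_mul c), integral_const_mul,
    integral_rpow (Or.inl hr), integral_rpow (Or.inl (by linarith)), one_rpow, one_rpow,
    zero_rpow (by linarith), zero_rpow (by linarith)]
  ring

lemma integral_rpow_mul_exp_neg_le {r : ℝ} (hr : -1 < r) :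
    ∫ t in (0 : ℝ)..1, t ^ r * exp (-t) ≤ 1 / (r + 1) + (exp (-1) - 1) / (r + 2) := by
  rw [← integral_rpow_mul_one_add_mul hr]
  have hint : IntervalIntegrable (fun t : ℝ ↦ t ^ r) MeasureTheory.volume 0 1 :=
    intervalIntegrable_rpow' hr
  refine integral_mono_on zero_le_one (hint.mul_continuousOn (by fun_prop))
    (hint.mul_continuousOn (by fun_prop)) fun t ht ↦ ?_
  have hchord := exp_mul_le_one_add_mul ht.1 ht.2 (-1)
  rw [mul_neg_one] at hchord
  exact mul_le_mul_of_nonneg_left hchord (rpow_nonneg ht.1 r)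

/-- lower incomplete Gamma bound
`γ(1−1/α, 1) = ∫_0^1 t^{-1/α} e^{-t} dt ≤ ((1+e^{-1})α² − e^{-1}α)/((α−1)(2α−1))`. -/
theorem incGamma_one_sub_inv_bound (α : ℝ) (hα : 1 < α) :
    (∫ t in (0 : ℝ)..1, t ^ (-(1 / α)) * Real.exp (-t))
      ≤ ((1 + Real.exp (-1)) * α ^ 2 - Real.exp (-1) * α) /
          ((α - 1) * (2 * α - 1)) := by
  have hr : -1 < -(1 / α) := by
    rw [neg_lt_neg_iff, div_lt_one (by linarith)]
    exact hα
  refine (integral_rpow_mul_exp_neg_le hr).trans_eq ?_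
  have hα₀ : α ≠ 0 := by linarith
  have hα₁ : α - 1 ≠ 0 := by linarith
  have hα₂ : 2 * α - 1 ≠ 0 := by linarith
  have hr₁ : -(1 / α) + 1 = (α - 1) / α := by field_simp; ring
  have hr₂ : -(1 / α) + 2 = (2 * α - 1) / α := by field_simp; ring
  rw [hr₁, hr₂, one_div_div, div_div_eq_mul_div, div_add_div _ _ hα₁ hα₂,
    div_eq_div_iff (mul_ne_zero hα₁ hα₂) (mul_ne_zero hα₁ hα₂)]
  ring
end

section
/- Let α > 1, η > 0, K ≥ 1 an integer, and L ∈ [0,∞)^K with L_1 ≤ L_2 ≤ … ≤ L_K and L_1 = 0. Define q_i := (min(1/(1+ηL_i), i^{-1/α}))^{(α+1)/2} for i ∈ {1,…,K}, and p_i := q_i / ∑_{j=1}^K q_j. For λ ∈ ℝ^K let λ̲ := λ − (min_j λ_j)·𝟏 and φ_i(λ) := ∫_1^∞ α (z+λ̲_i)^{-(α+1)} ∏_{j≠i} (1 − (z+λ̲_j)^{-α}) dz. Then for every i ∈ {1,…,K} and every ℓ ∈ [0,1]: ℓ · ( φ_i(ηL) − φ_i(η(L + (ℓ/p_i)·e_i))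 ) ≤ e(α+1)·η · (∑_{j=1}^K q_j) · q_i, where e_i is the i-th standard basis vector. -/
/-!
Raising the loss of arm `i` by `d` only moves its Pareto density `α (z + λᵢ)^{-(α+1)}` to the
right, and by the mean value theorem the density drops by at most
`d (α + 1) α (z + λᵢ)^{-(α+2)}`; the `i` arms with smaller loss each stay behind with
probability at most `1 - (z + λᵢ)^{-α}`. The resulting integral is at most `(1 + λᵢ)^{-(α+1)}`,
and also at most `2 (i + 1)^{-(α+1)/α}` (split at `(i + 1)^{1/α}` and compare the head with a
Beta integral), that is at most `2 qᵢ²`. With `d = ηℓ/pᵢ = ηℓ (∑ q)/qᵢ` the left-hand side is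
at most `2 ℓ² (α + 1) η (∑ q) qᵢ`, and `2 ≤ e`.
-/

/-- The FTPL arm-selection probability with Pareto(α) perturbations:
`φ_i(λ) = ∫_1^∞ α (z+λ̲_i)^{-(α+1)} ∏_{j≠i} (1 − (z+λ̲_j)^{-α}) dz`
where `λ̲ = λ − (min_j λ_j)·𝟏`. -/
noncomputable def ftplProb (α : ℝ) (K : ℕ) (i : Fin K) (lam : Fin K → ℝ) : ℝ :=
  ∫ z in Set.Ioi (1 : ℝ),
    α * (z + (lam i - ⨅ j, lam j)) ^ (-(α + 1)) *
      ∏ j ∈ Finset.univ.erase i, (1 - (z + (lam j - ⨅ j, lam j)) ^ (-α))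

open MeasureTheory Set Filter Topology

lemma setIntegral_Ioi_comp_add_right_s15 (f : ℝ → ℝ) (a c : ℝ) :
    ∫ x in Ioi a, f (x + c) = ∫ x in Ioi (a + c), f x := by
  rw [← image_add_const_Ioi]
  exact ((measurePreserving_add_right volume c).setIntegral_image_emb
    (measurableEmbedding_addRight c) f _).symm

lemma integrableOn_Ioi_comp_add_right {f : ℝ → ℝ} {a c : ℝ}
    (hf : IntegrableOn f (Ioi (a + c))) : IntegrableOn (fun x => f (x + c)) (Ioi a) := by
  rw [← image_add_const_Ioi] at hf
  exact ((measurePreserving_add_right volume c).integrableOn_image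
    (measurableEmbedding_addRight c)).1 hf

lemma one_sub_rpow_neg_mem_Icc_s15 {x a : ℝ} (hx : 1 ≤ x) (ha : 0 ≤ a) :
    1 - x ^ (-a) ∈ Icc (0 : ℝ) 1 :=
  ⟨sub_nonneg.2 (Real.rpow_le_one_of_one_le_of_nonpos hx (neg_nonpos.2 ha)),
    sub_le_self _ (Real.rpow_nonneg (zero_le_one.trans hx) _)⟩

lemma rpow_neg_sub_rpow_neg_add_le {β x δ : ℝ} (hβ : 0 ≤ β) (hx : 0 < x) (hδ : 0 ≤ δ) :
    x ^ (-β) - (x + δ) ^ (-β) ≤ δ * β * x ^ (-β - 1) := by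
  rcases hδ.eq_or_lt with rfl | hδ
  · simp
  obtain ⟨ξ, hξ, hslope⟩ := exists_hasDerivAt_eq_slope (fun t : ℝ => t ^ (-β))
    (fun t => -β * t ^ (-β - 1)) (lt_add_of_pos_right x hδ)
    (continuousOn_id.rpow_const fun _ ht => Or.inl (hx.trans_le ht.1).ne')
    (fun _ ht => Real.hasDerivAt_rpow_const (Or.inl (hx.trans ht.1).ne'))
  have hξx : ξ ^ (-β - 1) ≤ x ^ (-β - 1) := Real.rpow_le_rpow_of_nonpos hx hξ.1.le (by linarith)
  rw [add_sub_cancel_left, eq_div_iff hδ.ne'] at hslope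
  nlinarith [mul_le_mul_of_nonneg_left hξx (mul_nonneg hδ.le hβ)]

/-- `(α + 1)⁻¹` times the decrease rate `-(d/dx)` of the Pareto density `α x^{-(α+1)}`, times
the Pareto distribution function `1 - x^{-α}` to the power `m`. -/
noncomputable def stabilityKernel (α : ℝ) (m : ℕ) (x : ℝ) : ℝ :=
  α * x ^ (-(α + 2)) * (1 - x ^ (-α)) ^ m

/-- Under `u = x^{-α}` its integral over `(1, ∞)` becomes the Beta integral `∫₀¹ u (1-u)^m du`. -/
noncomputable def betaKernel (α : ℝ) (m : ℕ) (x : ℝ) : ℝ :=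
  α * x ^ (-(2 * α + 1)) * (1 - x ^ (-α)) ^ m

noncomputable def betaPrimitive (α : ℝ) (m : ℕ) (x : ℝ) : ℝ :=
  (1 - x ^ (-α)) ^ (m + 1) / (m + 1) - (1 - x ^ (-α)) ^ (m + 2) / (m + 2)

section Kernels

variable {α : ℝ} {m : ℕ}

lemma stabilityKernel_nonneg (hα : 0 ≤ α) {x : ℝ} (hx : 1 ≤ x) : 0 ≤ stabilityKernel α m x := by
  have := (one_sub_rpow_neg_mem_Icc_s15 hx hα).1
  have := Real.rpow_nonneg (zero_le_one.trans hx) (-(α + 2))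
  unfold stabilityKernel
  positivity

lemma stabilityKernel_le (hα : 0 ≤ α) {x : ℝ} (hx : 1 ≤ x) :
    stabilityKernel α m x ≤ α * x ^ (-(α + 2)) := by
  obtain ⟨h0, h1⟩ := one_sub_rpow_neg_mem_Icc_s15 hx hα
  exact mul_le_of_le_one_right (by positivity) (pow_le_one₀ h0 h1)

lemma integrableOn_stabilityKernel (hα : 0 < α) {A : ℝ} (hA : 1 ≤ A) :
    IntegrableOn (stabilityKernel α m) (Ioi A) := by
  have hpos : ∀ x ∈ Ioi A, x ≠ 0 := fun x hx => by linarith [mem_Ioi.1 hx]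
  refine Integrable.mono'
    ((integrableOn_Ioi_rpow_of_lt (a := -(α + 2)) (by linarith) (by linarith)).const_mul α)
    (ContinuousOn.aestronglyMeasurable ?_ measurableSet_Ioi) ?_
  · exact (continuousOn_const.mul (continuousOn_id.rpow_const fun x hx => Or.inl (hpos x hx))).mul
      ((continuousOn_const.sub (continuousOn_id.rpow_const fun x hx => Or.inl (hpos x hx))).pow m)
  · refine (ae_restrict_iff' measurableSet_Ioi).2 (ae_of_all _ fun x hx => ?_)
    have hx : 1 ≤ x := hA.trans (mem_Ioi.1 hx).le
    rw [Real.norm_of_nonneg (stabilityKernel_nonneg hα.le hx)]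
    exact stabilityKernel_le hα.le hx

lemma integral_stabilityKernel_le_rpow (hα : 0 < α) {A : ℝ} (hA : 1 ≤ A) :
    ∫ x in Ioi A, stabilityKernel α m x ≤ A ^ (-(α + 1)) := by
  have hA0 : 0 < A := by linarith
  calc ∫ x in Ioi A, stabilityKernel α m x ≤ ∫ x in Ioi A, α * x ^ (-(α + 2)) :=
        setIntegral_mono_on (integrableOn_stabilityKernel hα hA)
          ((integrableOn_Ioi_rpow_of_lt (by linarith) hA0).const_mul α) measurableSet_Ioi
          fun x hx => stabilityKernel_le hα.le (hA.trans (mem_Ioi.1 hx).le)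
    _ = α / (α + 1) * A ^ (-(α + 1)) := by
        rw [integral_const_mul, integral_Ioi_rpow_of_lt (by linarith) hA0,
          show -(α + 2) + 1 = -(α + 1) by ring]
        field_simp
    _ ≤ A ^ (-(α + 1)) :=
        mul_le_of_le_one_left (Real.rpow_nonneg hA0.le _)
          ((div_le_one (by linarith)).2 (by linarith))

lemma betaKernel_nonneg (hα : 0 ≤ α) {x : ℝ} (hx : 1 ≤ x) : 0 ≤ betaKernel α m x := by
  have := (one_sub_rpow_neg_mem_Icc_s15 hx hα).1
  have := Real.rpow_nonneg (zero_le_one.trans hx) (-(2 * α + 1))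
  unfold betaKernel
  positivity

lemma hasDerivAt_betaPrimitive {x : ℝ} (hx : 0 < x) :
    HasDerivAt (betaPrimitive α m) (betaKernel α m x) x := by
  have hu : HasDerivAt (fun x : ℝ => 1 - x ^ (-α)) (α * x ^ (-α - 1)) x := by
    simpa using (Real.hasDerivAt_rpow_const (p := -α) (Or.inl hx.ne')).const_sub 1
  refine (((hu.pow (m + 1)).div_const _).sub ((hu.pow (m + 2)).div_const _)).congr_deriv ?_
  have hsplit : x ^ (-(2 * α + 1)) = x ^ (-α - 1) * x ^ (-α) := by
    rw [← Real.rpow_add hx]; ring_nf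
  rw [betaKernel, hsplit]
  push_cast
  field_simp
  ring

lemma tendsto_betaPrimitive (hα : 0 < α) :
    Tendsto (betaPrimitive α m) atTop (𝓝 (1 / ((m + 1) * (m + 2)))) := by
  have hcont : Continuous fun u : ℝ =>
      (1 - u) ^ (m + 1) / (m + 1) - (1 - u) ^ (m + 2) / (m + 2) := by
    fun_prop
  convert (hcont.tendsto 0).comp (tendsto_rpow_neg_atTop hα) using 2
  · rfl
  · field_simp
    ring

lemma integrableOn_betaKernel (hα : 0 < α) : IntegrableOn (betaKernel α m) (Ioi 1) :=
  integrableOn_Ioi_deriv_of_nonneg' (fun _ hx => hasDerivAt_betaPrimitive (zero_lt_one.trans_le hx))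
    (fun _ hx => betaKernel_nonneg hα.le (mem_Ioi.1 hx).le) (tendsto_betaPrimitive hα)

lemma integral_betaKernel (hα : 0 < α) :
    ∫ x in Ioi 1, betaKernel α m x = 1 / ((m + 1) * (m + 2)) := by
  rw [integral_Ioi_of_hasDerivAt_of_nonneg'
    (fun _ hx => hasDerivAt_betaPrimitive (zero_lt_one.trans_le hx))
    (fun _ hx => betaKernel_nonneg hα.le (mem_Ioi.1 hx).le) (tendsto_betaPrimitive hα)]
  simp [betaPrimitive]

lemma integral_Ioc_stabilityKernel_le (hα : 1 ≤ α) {Z : ℝ} (hZ : 0 ≤ Z) :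
    ∫ x in Ioc 1 Z, stabilityKernel α m x ≤ Z ^ (α - 1) / ((m + 1) * (m + 2)) := by
  have hα0 : 0 < α := by linarith
  have hB := integrableOn_betaKernel (m := m) hα0
  calc ∫ x in Ioc 1 Z, stabilityKernel α m x ≤ ∫ x in Ioc 1 Z, Z ^ (α - 1) * betaKernel α m x := by
        refine setIntegral_mono_on
          ((integrableOn_stabilityKernel hα0 le_rfl).mono_set Ioc_subset_Ioi_self)
          ((hB.mono_set Ioc_subset_Ioi_self).const_mul _) measurableSet_Ioc fun x hx => ?_
        have hx0 : 0 < x := zero_lt_one.trans hx.1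
        have hsplit : stabilityKernel α m x = x ^ (α - 1) * betaKernel α m x := by
          rw [stabilityKernel, betaKernel, show -(α + 2) = α - 1 + -(2 * α + 1) by ring,
            Real.rpow_add hx0]
          ring
        rw [hsplit]
        exact mul_le_mul_of_nonneg_right (Real.rpow_le_rpow hx0.le hx.2 (by linarith))
          (betaKernel_nonneg hα0.le hx.1.le)
    _ = Z ^ (α - 1) * ∫ x in Ioc 1 Z, betaKernel α m x := integral_const_mul _ _
    _ ≤ Z ^ (α - 1) * ∫ x in Ioi 1, betaKernel α m x := by
        refine mul_le_mul_of_nonneg_left (setIntegral_mono_set hB ?_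
          Ioc_subset_Ioi_self.eventuallyLE) (Real.rpow_nonneg hZ _)
        exact ae_restrict_of_forall_mem measurableSet_Ioi fun x hx =>
          betaKernel_nonneg hα0.le (mem_Ioi.1 hx).le
    _ = Z ^ (α - 1) / ((m + 1) * (m + 2)) := by rw [integral_betaKernel hα0, mul_one_div]

lemma integral_stabilityKernel_le_two_mul_rpow (hα : 1 ≤ α) (m : ℕ) :
    ∫ x in Ioi 1, stabilityKernel α m x ≤ 2 * ((m : ℝ) + 1) ^ (-((α + 1) / α)) := by
  have hα0 : 0 < α := by linarith
  have hm : (1 : ℝ) ≤ m + 1 := by linarith [m.cast_nonneg (α := ℝ)]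
  set Z := ((m : ℝ) + 1) ^ (1 / α)
  have hZ : 1 ≤ Z := Real.one_le_rpow hm (by positivity)
  have hInt := integrableOn_stabilityKernel (m := m) hα0 le_rfl
  have head : Z ^ (α - 1) / ((m + 1) * (m + 2)) ≤ ((m : ℝ) + 1) ^ (-((α + 1) / α)) :=
    calc Z ^ (α - 1) / ((m + 1) * (m + 2)) ≤ Z ^ (α - 1) / ((m : ℝ) + 1) ^ (2 : ℝ) := by
          rw [Real.rpow_two]
          gcongr
          linarith
      _ = ((m : ℝ) + 1) ^ (-((α + 1) / α)) := by
          rw [← Real.rpow_mul (by linarith), ← Real.rpow_sub (by linarith)]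
          congr 1
          field_simp
          ring
  have tail : Z ^ (-(α + 1)) = ((m : ℝ) + 1) ^ (-((α + 1) / α)) := by
    rw [← Real.rpow_mul (by linarith)]
    congr 1
    field_simp
  rw [← Ioc_union_Ioi_eq_Ioi hZ, setIntegral_union Ioc_disjoint_Ioi_same measurableSet_Ioi
    (hInt.mono_set Ioc_subset_Ioi_self) (hInt.mono_set (Ioi_subset_Ioi hZ))]
  linarith [integral_Ioc_stabilityKernel_le (m := m) hα (zero_le_one.trans hZ),
    integral_stabilityKernel_le_rpow (m := m) hα0 hZ]

lemma integral_stabilityKernel_comp_add_le (hα : 1 ≤ α) {c : ℝ} (hc : 0 ≤ c) (m : ℕ) :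
    ∫ z in Ioi 1, stabilityKernel α m (z + c)
      ≤ 2 * min (1 / (1 + c)) (((m : ℝ) + 1) ^ (-(1 / α))) ^ (α + 1) := by
  have hα0 : 0 < α := by linarith
  have h1c : 1 ≤ 1 + c := by linarith
  rw [setIntegral_Ioi_comp_add_right_s15 (stabilityKernel α m)]
  rcases min_choice (1 / (1 + c)) (((m : ℝ) + 1) ^ (-(1 / α))) with h | h <;> rw [h]
  · rw [one_div, Real.inv_rpow (by linarith), ← Real.rpow_neg (by linarith)]
    have := integral_stabilityKernel_le_rpow (m := m) hα0 h1c
    have := Real.rpow_nonneg (by linarith : (0 : ℝ) ≤ 1 + c) (-(α + 1))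
    linarith
  · rw [← Real.rpow_mul (by positivity), show -(1 / α) * (α + 1) = -((α + 1) / α) by ring]
    calc ∫ x in Ioi (1 + c), stabilityKernel α m x ≤ ∫ x in Ioi 1, stabilityKernel α m x :=
          setIntegral_mono_set (integrableOn_stabilityKernel hα0 le_rfl)
            (ae_restrict_of_forall_mem measurableSet_Ioi fun x hx =>
              stabilityKernel_nonneg hα0.le (mem_Ioi.1 hx).le)
            (Ioi_subset_Ioi h1c).eventuallyLE
      _ ≤ _ := integral_stabilityKernel_le_two_mul_rpow hα m

end Kernels

noncomputable def ftplIntegrand (α : ℝ) {K : ℕ} (i : Fin K) (lam : Fin K → ℝ) (z : ℝ) : ℝ :=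
  α * (z + lam i) ^ (-(α + 1)) * ∏ j ∈ Finset.univ.erase i, (1 - (z + lam j) ^ (-α))

section FtplProb

variable {α : ℝ} {K : ℕ} (i : Fin K) {lam : Fin K → ℝ}

lemma ftplProb_eq_setIntegral (α : ℝ) (lam : Fin K → ℝ) :
    ftplProb α K i lam = ∫ z in Ioi (1 - ⨅ j, lam j), ftplIntegrand α i lam z := by
  rw [sub_eq_add_neg, ← setIntegral_Ioi_comp_add_right_s15]
  simp only [ftplProb, ftplIntegrand, ← sub_eq_add_neg, sub_add_eq_add_sub, add_sub_assoc']

lemma ftplIntegrand_nonneg (hα : 0 ≤ α) {z : ℝ} (hz : ∀ j, 1 ≤ z + lam j) :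
    0 ≤ ftplIntegrand α i lam z :=
  mul_nonneg (mul_nonneg hα (Real.rpow_nonneg (zero_le_one.trans (hz i)) _))
    (Finset.prod_nonneg fun j _ => (one_sub_rpow_neg_mem_Icc_s15 (hz j) hα).1)

lemma integrableOn_ftplIntegrand (hα : 0 < α) {a : ℝ} (ha : ∀ j, 1 ≤ a + lam j) :
    IntegrableOn (ftplIntegrand α i lam) (Ioi a) := by
  have hz : ∀ z ∈ Ioi a, ∀ j, 1 ≤ z + lam j := fun z hz j => by linarith [mem_Ioi.1 hz, ha j]
  have hpow : ∀ (p : ℝ) j, ContinuousOn (fun z => (z + lam j) ^ p) (Ioi a) := fun p j =>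
    (continuousOn_id.add continuousOn_const).rpow_const fun z hz' =>
      Or.inl (zero_lt_one.trans_le (hz z hz' j)).ne'
  refine Integrable.mono' ((integrableOn_Ioi_comp_add_right (integrableOn_Ioi_rpow_of_lt
    (a := -(α + 1)) (by linarith) (by linarith [ha i] : 0 < a + lam i))).const_mul α) ?_ ?_
  · exact ((continuousOn_const.mul (hpow _ i)).mul (continuousOn_finsetProd _ fun j _ =>
      continuousOn_const.sub (hpow _ j))).aestronglyMeasurable measurableSet_Ioi
  · refine (ae_restrict_iff' measurableSet_Ioi).2 (ae_of_all _ fun z hz' => ?_)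
    have hf := fun j => one_sub_rpow_neg_mem_Icc_s15 (hz z hz' j) hα.le
    rw [Real.norm_of_nonneg (ftplIntegrand_nonneg i hα.le (hz z hz'))]
    exact mul_le_of_le_one_right (mul_nonneg hα.le (Real.rpow_nonneg (by linarith [hz z hz' i]) _))
      (Finset.prod_le_one (fun j _ => (hf j).1) fun j _ => (hf j).2)

lemma ftplProb_eq_integral_Ioi_one (hinf : ⨅ j, lam j = 0) :
    ftplProb α K i lam = ∫ z in Ioi 1, ftplIntegrand α i lam z := by
  rw [ftplProb_eq_setIntegral, hinf, sub_zero]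

lemma integral_Ioi_one_ftplIntegrand_le_ftplProb (hα : 0 < α) (hnn : ∀ j, 0 ≤ lam j) :
    ∫ z in Ioi 1, ftplIntegrand α i lam z ≤ ftplProb α K i lam := by
  have : Nonempty (Fin K) := ⟨i⟩
  have hM : ∀ j, ⨅ k, lam k ≤ lam j := ciInf_le (Finite.bddBelow_range lam)
  have hM0 : 0 ≤ ⨅ j, lam j := le_ciInf hnn
  rw [ftplProb_eq_setIntegral]
  refine setIntegral_mono_set (integrableOn_ftplIntegrand i hα fun j => by linarith [hM j]) ?_
    (Ioi_subset_Ioi (by linarith)).eventuallyLE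
  exact ae_restrict_of_forall_mem measurableSet_Ioi fun z hz =>
    ftplIntegrand_nonneg i hα.le fun j => by linarith [mem_Ioi.1 hz, hM j]

lemma prod_erase_one_sub_rpow_neg_le (hα : 0 ≤ α) (hmono : Monotone lam) {z : ℝ}
    (hz : ∀ j, 1 ≤ z + lam j) :
    ∏ j ∈ Finset.univ.erase i, (1 - (z + lam j) ^ (-α)) ≤ (1 - (z + lam i) ^ (-α)) ^ (i : ℕ) := by
  have hf := fun j => one_sub_rpow_neg_mem_Icc_s15 (hz j) hα
  calc ∏ j ∈ Finset.univ.erase i, (1 - (z + lam j) ^ (-α))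
        ≤ ∏ j ∈ Finset.Iio i, (1 - (z + lam j) ^ (-α)) :=
        Finset.prod_le_prod_of_subset_of_le_one
          (fun j hj => Finset.mem_erase.2 ⟨(Finset.mem_Iio.1 hj).ne, Finset.mem_univ j⟩)
          (fun j _ => (hf j).1) fun j _ _ => (hf j).2
    _ ≤ ∏ j ∈ Finset.Iio i, (1 - (z + lam i) ^ (-α)) :=
        Finset.prod_le_prod (fun j _ => (hf j).1) fun j hj => sub_le_sub_left
          (Real.rpow_le_rpow_of_nonpos (by linarith [hz j])
            (by linarith [hmono (Finset.mem_Iio.1 hj).le]) (neg_nonpos.2 hα)) 1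
    _ = (1 - (z + lam i) ^ (-α)) ^ (i : ℕ) := by rw [Finset.prod_const, Fin.card_Iio]

lemma ftplIntegrand_sub_update_le (hα : 0 < α) (hmono : Monotone lam) {d z : ℝ} (hd : 0 ≤ d)
    (hz : ∀ j, 1 ≤ z + lam j) :
    ftplIntegrand α i lam z - ftplIntegrand α i (Function.update lam i (lam i + d)) z
      ≤ d * (α + 1) * stabilityKernel α i (z + lam i) := by
  set P := ∏ j ∈ Finset.univ.erase i, (1 - (z + lam j) ^ (-α))
  have hP0 : 0 ≤ P := Finset.prod_nonneg fun j _ => (one_sub_rpow_neg_mem_Icc_s15 (hz j) hα.le).1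
  have hPi := prod_erase_one_sub_rpow_neg_le i hα.le hmono hz
  have hprod : ∏ j ∈ Finset.univ.erase i,
      (1 - (z + Function.update lam i (lam i + d) j) ^ (-α)) = P :=
    Finset.prod_congr rfl fun j hj => by rw [Function.update_of_ne (Finset.ne_of_mem_erase hj)]
  have hmvt := rpow_neg_sub_rpow_neg_add_le (β := α + 1) (by linarith)
    (by linarith [hz i] : 0 < z + lam i) hd
  rw [show -(α + 1) - 1 = -(α + 2) by ring] at hmvt
  simp only [ftplIntegrand, stabilityKernel, Function.update_self, hprod, ← add_assoc]
  calc α * (z + lam i) ^ (-(α + 1)) * P - α * (z + lam i + d) ^ (-(α + 1)) * P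
        = α * ((z + lam i) ^ (-(α + 1)) - (z + lam i + d) ^ (-(α + 1))) * P := by ring
    _ ≤ α * (d * (α + 1) * (z + lam i) ^ (-(α + 2))) * (1 - (z + lam i) ^ (-α)) ^ (i : ℕ) := by
        gcongr
        exact mul_nonneg hα.le (mul_nonneg (mul_nonneg hd (by linarith))
          (Real.rpow_nonneg (by linarith [hz i]) _))
    _ = _ := by ring

lemma ftplProb_sub_update_le_integral (hα : 0 < α) (hmono : Monotone lam)
    (hnn : ∀ j, 0 ≤ lam j) (hinf : ⨅ j, lam j = 0) {d : ℝ} (hd : 0 ≤ d) :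
    ftplProb α K i lam - ftplProb α K i (Function.update lam i (lam i + d))
      ≤ d * (α + 1) * ∫ z in Ioi 1, stabilityKernel α i (z + lam i) := by
  set lam' := Function.update lam i (lam i + d)
  have hnn' : ∀ j, 0 ≤ lam' j := by
    intro j
    rcases eq_or_ne j i with rfl | h
    · simpa [lam'] using add_nonneg (hnn j) hd
    · simpa [lam', h] using hnn j
  have hI : IntegrableOn (ftplIntegrand α i lam) (Ioi 1) :=
    integrableOn_ftplIntegrand i hα fun j => by linarith [hnn j]
  have hI' : IntegrableOn (ftplIntegrand α i lam') (Ioi 1) :=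
    integrableOn_ftplIntegrand i hα fun j => by linarith [hnn' j]
  have hS : IntegrableOn (fun z => stabilityKernel α i (z + lam i)) (Ioi 1) :=
    integrableOn_Ioi_comp_add_right (integrableOn_stabilityKernel hα (by linarith [hnn i]))
  calc ftplProb α K i lam - ftplProb α K i lam'
        ≤ (∫ z in Ioi 1, ftplIntegrand α i lam z) - ∫ z in Ioi 1, ftplIntegrand α i lam' z := by
        rw [ftplProb_eq_integral_Ioi_one i hinf]
        exact sub_le_sub_left (integral_Ioi_one_ftplIntegrand_le_ftplProb i hα hnn') _
    _ = ∫ z in Ioi 1, (ftplIntegrand α i lam z - ftplIntegrand α i lam' z) :=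
        (integral_sub hI hI').symm
    _ ≤ ∫ z in Ioi 1, d * (α + 1) * stabilityKernel α i (z + lam i) :=
        setIntegral_mono_on (hI.sub hI') (hS.const_mul _) measurableSet_Ioi fun z hz =>
          ftplIntegrand_sub_update_le i hα hmono hd fun j => by linarith [mem_Ioi.1 hz, hnn j]
    _ = d * (α + 1) * ∫ z in Ioi 1, stabilityKernel α i (z + lam i) := integral_const_mul _ _

lemma ftplProb_sub_update_le (hα : 1 ≤ α) (hmono : Monotone lam) (hnn : ∀ j, 0 ≤ lam j)
    (hinf : ⨅ j, lam j = 0) {d : ℝ} (hd : 0 ≤ d) :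
    ftplProb α K i lam - ftplProb α K i (Function.update lam i (lam i + d))
      ≤ d * (α + 1) * (2 * min (1 / (1 + lam i)) (((i : ℕ) + 1 : ℝ) ^ (-(1 / α))) ^ (α + 1)) :=
  (ftplProb_sub_update_le_integral i (by linarith) hmono hnn hinf hd).trans
    (mul_le_mul_of_nonneg_left (integral_stabilityKernel_comp_add_le hα (hnn i) i)
      (mul_nonneg hd (by linarith)))

end FtplProb

/-- the stability bound. With sorted cumulative losses `L` (so arm `i : Fin K`
has rank `i+1`), exploration weights `q_i = (min(1/(1+ηL_i), (i+1)^{-1/α}))^{(α+1)/2}` and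
exploration probabilities `p = q/∑q`, for every arm `i` and loss `ℓ ∈ [0,1]`:
`ℓ(φ_i(ηL) − φ_i(η(L+(ℓ/p_i)e_i))) ≤ e(α+1)η(∑_j q_j)q_i`. -/
theorem ftpl_pareto_stability_bound
    (α η : ℝ) (hα : 1 < α) (hη : 0 < η) (K : ℕ) (hK : 0 < K)
    (L : Fin K → ℝ) (hL0 : ∀ j, 0 ≤ L j) (hmono : Monotone L) (hfirst : L ⟨0, hK⟩ = 0)
    (q p : Fin K → ℝ)
    (hq : ∀ j, q j = (min (1 / (1 + η * L j)) (((j : ℕ) + 1 : ℝ) ^ (-(1 / α)))) ^ ((α + 1) / 2))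
    (hp : ∀ j, p j = q j / ∑ k, q k)
    (i : Fin K) (ℓ : ℝ) (hℓ0 : 0 ≤ ℓ) (hℓ1 : ℓ ≤ 1) :
    ℓ * (ftplProb α K i (fun j => η * L j)
          - ftplProb α K i (fun j => η * (L j + if j = i then ℓ / p i else 0)))
      ≤ Real.exp 1 * (α + 1) * η * (∑ j, q j) * q i := by
  set lam : Fin K → ℝ := fun j => η * L j
  have hlam : ∀ j, 0 ≤ lam j := fun j => mul_nonneg hη.le (hL0 j)
  have : Nonempty (Fin K) := ⟨i⟩
  have hinf : ⨅ j, lam j = 0 :=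
    IsGLB.ciInf_eq (IsLeast.isGLB ⟨⟨⟨0, hK⟩, by simp [lam, hfirst]⟩, forall_mem_range.2 hlam⟩)
  have hmin : ∀ j, 0 < min (1 / (1 + lam j)) (((j : ℕ) + 1 : ℝ) ^ (-(1 / α))) := fun j =>
    lt_min (one_div_pos.2 (by linarith [hlam j])) (by positivity)
  have hq0 : ∀ j, 0 < q j := fun j => (hq j).symm ▸ Real.rpow_pos_of_pos (hmin j) _
  have hS : 0 < ∑ j, q j := Finset.sum_pos (fun j _ => hq0 j) Finset.univ_nonempty
  have hpi : 0 < p i := (hp i).symm ▸ div_pos (hq0 i) hS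
  set d := η * (ℓ / p i)
  have hupdate : (fun j => η * (L j + if j = i then ℓ / p i else 0))
      = Function.update lam i (lam i + d) := by
    funext j
    by_cases h : j = i <;> simp [lam, d, h, mul_add]
  have hqi : q i * q i = min (1 / (1 + lam i)) (((i : ℕ) + 1 : ℝ) ^ (-(1 / α))) ^ (α + 1) := by
    rw [hq i, ← Real.rpow_add (hmin i)]
    ring_nf
  rw [hupdate]
  calc ℓ * (ftplProb α K i lam - ftplProb α K i (Function.update lam i (lam i + d)))
        ≤ ℓ * (d * (α + 1) * (2 * (q i * q i))) := by
        rw [hqi]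
        exact mul_le_mul_of_nonneg_left
          (ftplProb_sub_update_le i hα.le (hmono.const_mul hη.le) hlam hinf (by positivity)) hℓ0
    _ = 2 * ℓ ^ 2 * ((α + 1) * η * (∑ j, q j) * q i) := by
        simp only [d]
        rw [hp i]
        field_simp
    _ ≤ Real.exp 1 * ((α + 1) * η * (∑ j, q j) * q i) :=
        mul_le_mul_of_nonneg_right (by nlinarith [Real.exp_one_gt_d9])
          (mul_pos (mul_pos (mul_pos (by linarith) hη) hS) (hq0 i)).le
    _ = Real.exp 1 * (α + 1) * η * (∑ j, q j) * q i := by ring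
end

section
/- Let α > 1, ζ ∈ (0,1), η > 0, K ≥ 2 an integer, i* ∈ {1,…,K}, and λ ∈ [0,∞)^K with λ_{i*} = 0. Define F(y) := 1 − y^{-α} for y ≥ 1 and F(y) := 0 for y < 1, and f(y) := α y^{-(α+1)} for y ≥ 1 and f(y) := 0 for y < 1. Then for every x with 0 ≤ x ≤ ζ/η: ∫_1^∞ f(z) · ∑_{i≠i*} η f(z + η(λ_i − x)) ∏_{j≠i, j≠i*} F(z + η(λ_j − x)) dz ≤ ∑_{i≠i*} e(1 − e^{-1}) η α / ( (1−ζ)^{α+1} (1 + ηλ_i)^{α+1} ). -/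
/-!
Bounding each CDF factor by `1` leaves `η f(z + η(λ_i − x))`, and since `z ≥ 1` and `ηx ≤ ζ` the
argument is at least `(1 − ζ)(1 + ηλ_i)`, so this is at most `ηα / ((1 − ζ)(1 + ηλ_i))^(α+1)`
uniformly in `z`. Integrating against the Pareto density, of total mass `1`, gives the sum of these
constants, and `e(1 − e⁻¹) = e − 1 ≥ 1`.
-/

/-- The Pareto(α) CDF, extended by `0` below `1`. -/
noncomputable def paretoCDF' (α y : ℝ) : ℝ := if 1 ≤ y then 1 - y ^ (-α) else 0

/-- The Pareto(α) density, extended by `0` below `1`. -/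
noncomputable def paretoPDF' (α y : ℝ) : ℝ := if 1 ≤ y then α * y ^ (-(α + 1)) else 0

open MeasureTheory Set Real

lemma paretoPDF'_nonneg {α : ℝ} (hα : 0 ≤ α) (y : ℝ) : 0 ≤ paretoPDF' α y := by
  unfold paretoPDF'
  split_ifs with hy
  · exact mul_nonneg hα (rpow_nonneg (by linarith) _)
  · exact le_rfl

lemma paretoCDF'_nonneg {α : ℝ} (hα : 0 ≤ α) (y : ℝ) : 0 ≤ paretoCDF' α y := by
  unfold paretoCDF'
  split_ifs with hy
  · linarith [rpow_le_one_of_one_le_of_nonpos hy (neg_nonpos.mpr hα)]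
  · exact le_rfl

lemma paretoCDF'_le_one (α y : ℝ) : paretoCDF' α y ≤ 1 := by
  unfold paretoCDF'
  split_ifs with hy
  · linarith [rpow_nonneg (zero_le_one.trans hy) (-α)]
  · exact zero_le_one

lemma paretoPDF'_le_of_le {α c y : ℝ} (hα : 0 ≤ α) (hc : 0 < c) (hcy : c ≤ y) :
    paretoPDF' α y ≤ α / c ^ (α + 1) := by
  have hcpow : 0 < c ^ (α + 1) := rpow_pos_of_pos hc _
  unfold paretoPDF'
  split_ifs with hy
  · rw [rpow_neg (hc.le.trans hcy), ← div_eq_mul_inv]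
    exact div_le_div_of_nonneg_left hα hcpow (rpow_le_rpow hc.le hcy (by linarith))
  · positivity

lemma paretoPDF'_shift_le {α ζ η b x z : ℝ} (hα : 0 ≤ α) (hζ0 : 0 ≤ ζ) (hζ1 : ζ < 1)
    (hη : 0 ≤ η) (hb : 0 ≤ b) (hxζ : η * x ≤ ζ) (hz : 1 ≤ z) :
    paretoPDF' α (z + η * (b - x)) ≤ α / ((1 - ζ) ^ (α + 1) * (1 + η * b) ^ (α + 1)) := by
  have hηb : 0 ≤ η * b := mul_nonneg hη hb
  rw [← mul_rpow (by linarith) (by linarith)]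
  exact paretoPDF'_le_of_le hα (mul_pos (by linarith) (by linarith))
    (by nlinarith [mul_nonneg hζ0 hηb])

lemma integrableOn_paretoPDF' {α : ℝ} (hα : 0 < α) :
    IntegrableOn (paretoPDF' α) (Ioi 1) := by
  have hrpow : IntegrableOn (fun z : ℝ => α * z ^ (-(α + 1))) (Ioi 1) :=
    (integrableOn_Ioi_rpow_of_lt (by linarith) one_pos).const_mul α
  exact hrpow.congr_fun (fun z hz => (if_pos (le_of_lt (mem_Ioi.mp hz))).symm) measurableSet_Ioi

lemma integral_paretoPDF' {α : ℝ} (hα : 0 < α) : ∫ z in Ioi 1, paretoPDF' α z = 1 := by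
  rw [setIntegral_congr_fun (f := paretoPDF' α) (g := fun z => α * z ^ (-(α + 1)))
    measurableSet_Ioi fun z hz => if_pos (le_of_lt (mem_Ioi.mp hz)), integral_const_mul,
    integral_Ioi_rpow_of_lt (by linarith) one_pos, one_rpow, show -(α + 1) + 1 = -α by ring]
  field_simp

lemma setIntegral_paretoPDF'_mul_le {α C : ℝ} {g : ℝ → ℝ} (hα : 0 < α) (hg0 : ∀ z, 0 ≤ g z)
    (hgC : ∀ z, 1 < z → g z ≤ C) : ∫ z in Ioi 1, paretoPDF' α z * g z ≤ C := by
  calc ∫ z in Ioi 1, paretoPDF' α z * g z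
      ≤ ∫ z in Ioi 1, paretoPDF' α z * C := by
        refine integral_mono_of_nonneg
          (.of_forall fun z => mul_nonneg (paretoPDF'_nonneg hα.le z) (hg0 z))
          ((integrableOn_paretoPDF' hα).mul_const C) ?_
        rw [Filter.EventuallyLE, ae_restrict_iff' measurableSet_Ioi]
        exact .of_forall fun z hz => mul_le_mul_of_nonneg_left (hgC z hz)
          (paretoPDF'_nonneg hα.le z)
    _ = C := by rw [integral_mul_const, integral_paretoPDF' hα, one_mul]

lemma one_le_exp_one_mul_one_sub_exp_neg_one : 1 ≤ exp 1 * (1 - exp (-1)) := by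
  have : exp 1 * exp (-1) = 1 := by rw [← exp_add]; norm_num
  nlinarith [add_one_le_exp (1 : ℝ)]

theorem ftpl_pareto_optimal_arm_derivative_bound_general
    (α ζ η : ℝ) (hα : 1 < α) (hζ0 : 0 < ζ) (hζ1 : ζ < 1) (hη : 0 < η)
    (K : ℕ) (istar : Fin K)
    (lam : Fin K → ℝ) (hlam : ∀ j, 0 ≤ lam j)
    (x : ℝ) (hx : x ≤ ζ / η) :
    (∫ z in Set.Ioi (1 : ℝ),
        paretoPDF' α z *
          ∑ i ∈ Finset.univ.erase istar,
            η * paretoPDF' α (z + η * (lam i - x)) *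
              ∏ j ∈ (Finset.univ.erase istar).erase i,
                paretoCDF' α (z + η * (lam j - x)))
      ≤ ∑ i ∈ Finset.univ.erase istar,
          Real.exp 1 * (1 - Real.exp (-1)) * η * α /
            ((1 - ζ) ^ (α + 1) * (1 + η * lam i) ^ (α + 1)) := by
  have hα0 : 0 < α := by linarith
  have hxζ : η * x ≤ ζ := by rwa [le_div_iff₀ hη, mul_comm] at hx
  have hpdf : ∀ y, 0 ≤ η * paretoPDF' α y := fun y =>
    mul_nonneg hη.le (paretoPDF'_nonneg hα0.le y)
  have hprod : ∀ (s : Finset (Fin K)) z, 0 ≤ ∏ j ∈ s, paretoCDF' α (z + η * (lam j - x)) :=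
    fun s z => Finset.prod_nonneg fun j _ => paretoCDF'_nonneg hα0.le _
  refine setIntegral_paretoPDF'_mul_le hα0
    (fun z => Finset.sum_nonneg fun i _ => mul_nonneg (hpdf _) (hprod _ z))
    (fun z hz => Finset.sum_le_sum fun i _ => ?_)
  have hden : 0 ≤ α / ((1 - ζ) ^ (α + 1) * (1 + η * lam i) ^ (α + 1)) := by
    have := hlam i
    have : 0 < 1 - ζ := by linarith
    positivity
  calc _ ≤ η * paretoPDF' α (z + η * (lam i - x)) :=
        mul_le_of_le_one_right (hpdf _)
          (Finset.prod_le_one (fun j _ => paretoCDF'_nonneg hα0.le _)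
            fun j _ => paretoCDF'_le_one _ _)
    _ ≤ η * (α / ((1 - ζ) ^ (α + 1) * (1 + η * lam i) ^ (α + 1))) :=
        mul_le_mul_of_nonneg_left
          (paretoPDF'_shift_le hα0.le hζ0.le hζ1 hη.le (hlam i) hxζ hz.le) hη.le
    _ ≤ exp 1 * (1 - exp (-1)) * (η * (α / ((1 - ζ) ^ (α + 1) * (1 + η * lam i) ^ (α + 1)))) :=
        le_mul_of_one_le_left (mul_nonneg hη.le hden) one_le_exp_one_mul_one_sub_exp_neg_one
    _ = _ := by ring

/-- the key integral bound of the modified stability lemma for the optimal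
arm: for `0 ≤ x ≤ ζ/η` and `λ_{i*} = 0`,
`∫_1^∞ f(z) ∑_{i≠i*} η f(z+η(λ_i−x)) ∏_{j≠i,i*} F(z+η(λ_j−x)) dz
  ≤ ∑_{i≠i*} e(1−e^{-1})ηα/((1−ζ)^{α+1}(1+ηλ_i)^{α+1})`. -/
theorem ftpl_pareto_optimal_arm_derivative_bound
    (α ζ η : ℝ) (hα : 1 < α) (hζ0 : 0 < ζ) (hζ1 : ζ < 1) (hη : 0 < η)
    (K : ℕ) (hK : 2 ≤ K) (istar : Fin K)
    (lam : Fin K → ℝ) (hlam : ∀ j, 0 ≤ lam j) (hstar : lam istar = 0)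
    (x : ℝ) (hx0 : 0 ≤ x) (hx : x ≤ ζ / η) :
    (∫ z in Set.Ioi (1 : ℝ),
        paretoPDF' α z *
          ∑ i ∈ Finset.univ.erase istar,
            η * paretoPDF' α (z + η * (lam i - x)) *
              ∏ j ∈ (Finset.univ.erase istar).erase i,
                paretoCDF' α (z + η * (lam j - x)))
      ≤ ∑ i ∈ Finset.univ.erase istar,
          Real.exp 1 * (1 - Real.exp (-1)) * η * α /
            ((1 - ζ) ^ (α + 1) * (1 + η * lam i) ^ (α + 1)) :=
  ftpl_pareto_optimal_arm_derivative_bound_general α ζ η hα hζ0 hζ1 hη K istar lam hlam x hx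
end
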